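/- arXiv:1912.09767 — 4 statements merged into one kernel-verified Lean document; each statement's English description precedes it below -/
import Mathlib

section
/- Let Θ* ∈ ℝ^{(n+m)×n} have rank r ≥ 1 and let X = ZΘ* for a matrix Z ∈ ℝ^{N×(n+m)}. Set s := 1 if K₁ = K₂ and s := ⌊(K₂/K₁)²⌋ + 1 if K₁ < K₂. If Z satisfies the weak RIP of order (2+3s)r with some constant δ < 5 − 2√6 and constants K₂ ≥ K₁ > 0, then any matrix Θ̂ ∈ ℝ^{(n+m)×n} with ZΘ̂ = X and ‖Θ̂‖_nuc ≤ ‖Θ*‖_nuc satisfies Θ̂ = Θ*; in particular every minimizer of the nuclear norm subject to ZΘ = X equals Θ*. -/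
/-
Write `Δ = Θhat - Θstar`, so that `Z * Δ = 0`. With `P`, `Q` the orthogonal projections onto the
column and row spaces of `Θstar`, split `Δ = Δ₀ + Δc` with `Δc = (1 - P) Δ (1 - Q)`; then
`rank Δ₀ ≤ 2r`, while `Δc` has column and row spaces orthogonal to those of `Θstar`. Pairing with
the dual certificate `U Vᵀ + Uc Vcᵀ`, which is a contraction, gives
`‖Θstar + Δ‖_nuc ≥ ‖Θstar‖_nuc + ‖Δc‖_nuc - ‖Δ₀‖_nuc`, hence `‖Δc‖_nuc ≤ ‖Δ₀‖_nuc`.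
Cut the singular value decomposition of `Δc`, sorted decreasingly, into blocks `Δ₁, Δ₂, …` of
`t = 3sr` terms. Every singular value of `Δₖ₊₁` is at most the mean of those of `Δₖ`, so
`√t ∑_{k ≥ 2} ‖Δₖ‖_F ≤ ‖Δc‖_nuc`. The weak RIP, applied to `Δ₀ + Δ₁` (rank `≤ (2 + 3s)r`) and to
each `Δₖ`, then gives `K₁ (1 - δ) √t ‖Δ₀ + Δ₁‖_F ≤ K₂ (1 + δ) √(2r) ‖Δ₀ + Δ₁‖_F`. As `K₂² ≤ s K₁²`,
and `δ < 5 - 2√6` means `2 (1 + δ)² < 3 (1 - δ)²`, this forces `Δ₀ + Δ₁ = 0`; so `Δ₀ = 0` by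
orthogonality, and then `Δc = 0`.
-/

open MeasureTheory ProbabilityTheory Matrix Real

/-- Frobenius norm of a real matrix. -/
noncomputable def frobNorm {p q : ℕ} (A : Matrix (Fin p) (Fin q) ℝ) : ℝ :=
  Real.sqrt (∑ i, ∑ j, (A i j) ^ 2)

/-- Singular values of a real matrix: square roots of the eigenvalues of Aᵀ * A. -/
noncomputable def svals {p q : ℕ} (A : Matrix (Fin p) (Fin q) ℝ) (j : Fin q) : ℝ :=
  Real.sqrt ((Matrix.isHermitian_conjTranspose_mul_self A).eigenvalues j)

/-- Operator (spectral) norm: the largest singular value. -/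
noncomputable def opNorm {p q : ℕ} (A : Matrix (Fin p) (Fin q) ℝ) : ℝ := ⨆ j, svals A j

/-- Nuclear norm: the sum of the singular values. -/
noncomputable def nucNorm {p q : ℕ} (A : Matrix (Fin p) (Fin q) ℝ) : ℝ := ∑ j, svals A j

/-- Weak restricted isometry property of order `r` with constant `δ` and constants `K₁ ≤ K₂`,
for matrices `Δ ∈ ℝ^{d × n}` of rank at most `r`. -/
def WeakRIP {N d : ℕ} (Z : Matrix (Fin N) (Fin d) ℝ) (n r : ℕ) (δ K₁ K₂ : ℝ) : Prop :=
  ∀ Δ : Matrix (Fin d) (Fin n) ℝ, Δ.rank ≤ r →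
    K₁ * (1 - δ) * frobNorm Δ ≤ frobNorm (Z * Δ) / Real.sqrt N ∧
    frobNorm (Z * Δ) / Real.sqrt N ≤ K₂ * (1 + δ) * frobNorm Δ

namespace LowRankRecovery

open Finset

variable {p q : ℕ}

section Rank

variable {m n K : Type*} [Fintype n] [Field K]

lemma rank_add_le (A B : Matrix m n K) : (A + B).rank ≤ A.rank + B.rank := by
  rw [rank, rank, rank, mulVecLin_add]
  exact (Submodule.finrank_mono (LinearMap.range_add_le _ _)).trans
    (Submodule.finrank_add_le_finrank_add_finrank _ _)

lemma rank_sum_le {ι : Type*} (s : Finset ι) (A : ι → Matrix m n K) :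
    (∑ k ∈ s, A k).rank ≤ ∑ k ∈ s, (A k).rank :=
  Finset.sum_hom_rel (r := fun (M : Matrix m n K) b => M.rank ≤ b) (by simp)
    fun _ _ _ h => (rank_add_le _ _).trans (by gcongr)

lemma rank_sum_le_card {ι : Type*} (s : Finset ι) (A : ι → Matrix m n K)
    (hA : ∀ k ∈ s, (A k).rank ≤ 1) : (∑ k ∈ s, A k).rank ≤ #s :=
  (rank_sum_le s A).trans (by simpa using sum_le_sum hA)

end Rank

/-! ### Frobenius inner product -/

section FrobeniusNorm

attribute [local instance] Matrix.frobeniusNormedAddCommGroup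

lemma frobNorm_eq_norm (A : Matrix (Fin p) (Fin q) ℝ) : frobNorm A = ‖A‖ := by
  simp [frobenius_norm_def, frobNorm, Real.sqrt_eq_rpow]

lemma frobNorm_nonneg (A : Matrix (Fin p) (Fin q) ℝ) : 0 ≤ frobNorm A := by
  simpa only [frobNorm_eq_norm] using norm_nonneg A

lemma frobNorm_eq_zero {A : Matrix (Fin p) (Fin q) ℝ} : frobNorm A = 0 ↔ A = 0 := by
  rw [frobNorm_eq_norm, norm_eq_zero]

lemma frobNorm_neg (A : Matrix (Fin p) (Fin q) ℝ) : frobNorm (-A) = frobNorm A := by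
  simp only [frobNorm_eq_norm, norm_neg]

lemma frobNorm_sum_le {ι : Type*} (s : Finset ι) (A : ι → Matrix (Fin p) (Fin q) ℝ) :
    frobNorm (∑ k ∈ s, A k) ≤ ∑ k ∈ s, frobNorm (A k) := by
  simpa only [frobNorm_eq_norm] using norm_sum_le s A

end FrobeniusNorm

noncomputable def frobInner (A B : Matrix (Fin p) (Fin q) ℝ) : ℝ := (Aᴴ * B).trace

lemma frobNorm_sq (A : Matrix (Fin p) (Fin q) ℝ) : frobNorm A ^ 2 = frobInner A A := by
  rw [frobNorm, Real.sq_sqrt (by positivity), frobInner, trace, Finset.sum_comm]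
  simp [Matrix.mul_apply, sq]

lemma frobInner_comm (A B : Matrix (Fin p) (Fin q) ℝ) : frobInner A B = frobInner B A := by
  rw [frobInner, frobInner, ← trace_transpose, transpose_mul, conjTranspose_eq_transpose_of_trivial,
    conjTranspose_eq_transpose_of_trivial, transpose_transpose]

lemma frobInner_add_left (A B C : Matrix (Fin p) (Fin q) ℝ) :
    frobInner (A + B) C = frobInner A C + frobInner B C := by
  simp [frobInner, Matrix.add_mul]

lemma frobInner_add_right (A B C : Matrix (Fin p) (Fin q) ℝ) :
    frobInner A (B + C) = frobInner A B + frobInner A C := by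
  simp [frobInner, Matrix.mul_add]

lemma frobInner_neg_left (A B : Matrix (Fin p) (Fin q) ℝ) :
    frobInner (-A) B = -frobInner A B := by
  simp [frobInner]

lemma frobInner_smul_left (c : ℝ) (A B : Matrix (Fin p) (Fin q) ℝ) :
    frobInner (c • A) B = c * frobInner A B := by
  simp [frobInner]

lemma frobInner_zero_right (A : Matrix (Fin p) (Fin q) ℝ) : frobInner A 0 = 0 := by
  simp [frobInner]

lemma frobInner_sum_right {ι : Type*} (s : Finset ι) (A : Matrix (Fin p) (Fin q) ℝ)
    (B : ι → Matrix (Fin p) (Fin q) ℝ) :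
    frobInner A (∑ k ∈ s, B k) = ∑ k ∈ s, frobInner A (B k) := by
  simp [frobInner, Matrix.mul_sum, trace_sum]

lemma frobInner_sum_left {ι : Type*} (s : Finset ι) (A : ι → Matrix (Fin p) (Fin q) ℝ)
    (B : Matrix (Fin p) (Fin q) ℝ) : frobInner (∑ k ∈ s, A k) B = ∑ k ∈ s, frobInner (A k) B := by
  rw [frobInner_comm, frobInner_sum_right]
  simp only [frobInner_comm B]

lemma frobInner_mul_left {r : ℕ} (X : Matrix (Fin p) (Fin r) ℝ) (Y : Matrix (Fin r) (Fin q) ℝ)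
    (Z : Matrix (Fin p) (Fin q) ℝ) : frobInner (X * Y) Z = frobInner Y (Xᴴ * Z) := by
  rw [frobInner, frobInner, conjTranspose_mul, Matrix.mul_assoc]

lemma frobInner_mul_right {r : ℕ} (X : Matrix (Fin p) (Fin r) ℝ) (Y : Matrix (Fin r) (Fin q) ℝ)
    (Z : Matrix (Fin p) (Fin q) ℝ) : frobInner (X * Y) Z = frobInner X (Z * Yᴴ) := by
  rw [frobInner, frobInner, conjTranspose_mul, Matrix.mul_assoc, trace_mul_comm, Matrix.mul_assoc]

lemma frobInner_vecMulVec_left (x : Fin p → ℝ) (y : Fin q → ℝ) (B : Matrix (Fin p) (Fin q) ℝ) :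
    frobInner (vecMulVec x y) B = x ⬝ᵥ (B *ᵥ y) := by
  rw [frobInner, conjTranspose_vecMulVec, vecMulVec_mul, trace_vecMulVec, dotProduct_comm,
    dotProduct_mulVec]
  simp

lemma frobNorm_le_frobNorm_add {A B : Matrix (Fin p) (Fin q) ℝ} (h : frobInner A B = 0) :
    frobNorm A ≤ frobNorm (A + B) := by
  have hsq : frobNorm A ^ 2 ≤ frobNorm (A + B) ^ 2 := by
    rw [frobNorm_sq, frobNorm_sq, frobInner_add_left, frobInner_add_right, frobInner_add_right, h,
      frobInner_comm B A, h, ← frobNorm_sq B]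
    nlinarith [sq_nonneg (frobNorm B)]
  exact pow_le_pow_iff_left₀ (frobNorm_nonneg _) (frobNorm_nonneg _) two_ne_zero |>.mp hsq

/-! ### Singular value decomposition -/

lemma mulVec_dotProduct_mulVec {r : ℕ} (B : Matrix (Fin r) (Fin q) ℝ) (x y : Fin q → ℝ) :
    (B *ᵥ x) ⬝ᵥ (B *ᵥ y) = x ⬝ᵥ ((Bᴴ * B) *ᵥ y) := by
  rw [← mulVec_mulVec, conjTranspose_eq_transpose_of_trivial, dotProduct_mulVec x Bᵀ,
    vecMul_transpose]

-- The singular value decomposition is read off the spectral decomposition of `Aᴴ A`: for its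
-- orthonormal eigenvectors `vᵢ = rightSvec A i` and eigenvalues `σᵢ² = sqSval A i`,
-- `A = ∑ᵢ (A vᵢ) vᵢᵀ` (`sum_svdTerm`) with `A vᵢ = σᵢ uᵢ`.
noncomputable def sqSval (A : Matrix (Fin p) (Fin q) ℝ) (i : Fin q) : ℝ :=
  (isHermitian_conjTranspose_mul_self A).eigenvalues i

noncomputable def rightSvec (A : Matrix (Fin p) (Fin q) ℝ) (i : Fin q) : Fin q → ℝ :=
  ⇑((isHermitian_conjTranspose_mul_self A).eigenvectorBasis i)

lemma sqSval_nonneg (A : Matrix (Fin p) (Fin q) ℝ) (i : Fin q) : 0 ≤ sqSval A i :=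
  eigenvalues_conjTranspose_mul_self_nonneg A i

lemma svals_eq_sqrt (A : Matrix (Fin p) (Fin q) ℝ) (i : Fin q) : svals A i = √(sqSval A i) :=
  rfl

lemma svals_sq (A : Matrix (Fin p) (Fin q) ℝ) (i : Fin q) : svals A i ^ 2 = sqSval A i :=
  Real.sq_sqrt (sqSval_nonneg A i)

lemma conjTranspose_mul_self_mulVec_rightSvec (A : Matrix (Fin p) (Fin q) ℝ) (i : Fin q) :
    (Aᴴ * A) *ᵥ rightSvec A i = sqSval A i • rightSvec A i :=
  (isHermitian_conjTranspose_mul_self A).mulVec_eigenvectorBasis i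

lemma rightSvec_dotProduct (A : Matrix (Fin p) (Fin q) ℝ) (i j : Fin q) :
    rightSvec A i ⬝ᵥ rightSvec A j = if i = j then 1 else 0 := by
  simpa [rightSvec, PiLp.inner_apply, dotProduct, mul_comm] using
    orthonormal_iff_ite.mp (isHermitian_conjTranspose_mul_self A).eigenvectorBasis.orthonormal i j

lemma sum_vecMulVec_rightSvec (A : Matrix (Fin p) (Fin q) ℝ) :
    ∑ i, vecMulVec (rightSvec A i) (rightSvec A i) = 1 := by
  have hU := Matrix.mem_unitaryGroup_iff.mp
    (isHermitian_conjTranspose_mul_self A).eigenvectorUnitary.2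
  ext b c
  simpa [Matrix.sum_apply, vecMulVec_apply, Matrix.mul_apply, rightSvec,
    IsHermitian.eigenvectorUnitary_apply] using congrFun (congrFun hU b) c

lemma mulVec_rightSvec_dotProduct (A : Matrix (Fin p) (Fin q) ℝ) (i j : Fin q) :
    (A *ᵥ rightSvec A i) ⬝ᵥ (A *ᵥ rightSvec A j) = if i = j then sqSval A i else 0 := by
  rw [mulVec_dotProduct_mulVec, conjTranspose_mul_self_mulVec_rightSvec, dotProduct_smul,
    rightSvec_dotProduct]
  split_ifs with h <;> simp [h]

lemma mulVec_rightSvec_eq_zero {A : Matrix (Fin p) (Fin q) ℝ} {i : Fin q} (h : sqSval A i = 0) :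
    A *ᵥ rightSvec A i = 0 :=
  dotProduct_self_eq_zero.mp (by simpa [h] using mulVec_rightSvec_dotProduct A i i)

lemma rightSvec_eq_smul {A : Matrix (Fin p) (Fin q) ℝ} {i : Fin q} (h : sqSval A i ≠ 0) :
    rightSvec A i = (sqSval A i)⁻¹ • (Aᴴ *ᵥ (A *ᵥ rightSvec A i)) := by
  rw [mulVec_mulVec, conjTranspose_mul_self_mulVec_rightSvec, smul_smul, inv_mul_cancel₀ h,
    one_smul]

lemma mulVec_rightSvec_eq_zero_of_mul_conjTranspose {r : ℕ} {A : Matrix (Fin p) (Fin q) ℝ}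
    {B : Matrix (Fin r) (Fin q) ℝ} (hBA : B * Aᴴ = 0) {i : Fin q} (h : sqSval A i ≠ 0) :
    B *ᵥ rightSvec A i = 0 := by
  rw [rightSvec_eq_smul h, mulVec_smul, mulVec_mulVec, hBA, zero_mulVec, smul_zero]

noncomputable def svdTerm (A : Matrix (Fin p) (Fin q) ℝ) (i : Fin q) : Matrix (Fin p) (Fin q) ℝ :=
  vecMulVec (A *ᵥ rightSvec A i) (rightSvec A i)

lemma sum_svdTerm (A : Matrix (Fin p) (Fin q) ℝ) : ∑ i, svdTerm A i = A := by
  simp_rw [svdTerm, ← mul_vecMulVec]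
  rw [← Matrix.mul_sum, sum_vecMulVec_rightSvec, Matrix.mul_one]

lemma svdTerm_eq_mul_self (A : Matrix (Fin p) (Fin q) ℝ) (i : Fin q) :
    svdTerm A i =
      ((sqSval A i)⁻¹ • vecMulVec (A *ᵥ rightSvec A i) (A *ᵥ rightSvec A i)) * A := by
  by_cases h : sqSval A i = 0
  · simp [svdTerm, mulVec_rightSvec_eq_zero h]
  · rw [smul_mul, vecMulVec_mul, ← mulVec_transpose, ← conjTranspose_eq_transpose_of_trivial,
      ← vecMulVec_smul, ← rightSvec_eq_smul h, svdTerm]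

lemma frobInner_svdTerm_left (A : Matrix (Fin p) (Fin q) ℝ) (i : Fin q)
    (B : Matrix (Fin p) (Fin q) ℝ) :
    frobInner (svdTerm A i) B = (A *ᵥ rightSvec A i) ⬝ᵥ (B *ᵥ rightSvec A i) :=
  frobInner_vecMulVec_left _ _ _

lemma frobInner_svdTerm_svdTerm (A : Matrix (Fin p) (Fin q) ℝ) (i j : Fin q) :
    frobInner (svdTerm A i) (svdTerm A j) = if i = j then sqSval A i else 0 := by
  rw [frobInner_svdTerm_left, svdTerm, vecMulVec_mulVec, op_smul_eq_smul, dotProduct_smul,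
    mulVec_rightSvec_dotProduct, rightSvec_dotProduct]
  rcases eq_or_ne i j with rfl | h <;> simp [*, Ne.symm]

lemma rank_svdTerm_le (A : Matrix (Fin p) (Fin q) ℝ) (i : Fin q) : (svdTerm A i).rank ≤ 1 :=
  rank_vecMulVec_le _ _

lemma nucNorm_nonneg (A : Matrix (Fin p) (Fin q) ℝ) : 0 ≤ nucNorm A :=
  sum_nonneg fun _ _ => Real.sqrt_nonneg _

lemma card_sqSval_ne_zero (A : Matrix (Fin p) (Fin q) ℝ) :
    #{i | sqSval A i ≠ 0} = A.rank := by
  rw [← rank_conjTranspose_mul_self,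
    (isHermitian_conjTranspose_mul_self A).rank_eq_card_non_zero_eigs,
    Fintype.card_subtype]
  rfl

lemma frobNorm_sq_eq_sum_sqSval (A : Matrix (Fin p) (Fin q) ℝ) :
    frobNorm A ^ 2 = ∑ i, sqSval A i := by
  rw [frobNorm_sq, frobInner, (isHermitian_conjTranspose_mul_self A).trace_eq_sum_eigenvalues]
  rfl

lemma nucNorm_le_sqrt_rank_mul_frobNorm (A : Matrix (Fin p) (Fin q) ℝ) :
    nucNorm A ≤ √A.rank * frobNorm A := by
  calc nucNorm A = ∑ i with sqSval A i ≠ 0, 1 * svals A i := by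
        simp only [one_mul]
        refine (sum_filter_of_ne (p := fun i => sqSval A i ≠ 0) fun i _ h => ?_).symm
        contrapose! h
        rw [svals_eq_sqrt, h, Real.sqrt_zero]
    _ ≤ √(∑ i with sqSval A i ≠ 0, (1 : ℝ) ^ 2) * √(∑ i with sqSval A i ≠ 0, svals A i ^ 2) :=
        Real.sum_mul_le_sqrt_mul_sqrt _ _ _
    _ ≤ √A.rank * √(∑ i, sqSval A i) := by
        simp only [one_pow, sum_const, nsmul_eq_mul, mul_one, svals_sq, card_sqSval_ne_zero]
        gcongr
        exacts [fun i _ _ => sqSval_nonneg A i, filter_subset _ _]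
    _ = √A.rank * frobNorm A := by
        rw [← frobNorm_sq_eq_sum_sqSval, Real.sqrt_sq (frobNorm_nonneg A)]

lemma eq_zero_of_nucNorm_nonpos {A : Matrix (Fin p) (Fin q) ℝ} (h : nucNorm A ≤ 0) : A = 0 := by
  have hsv : ∀ i, svals A i = 0 := fun i =>
    (sum_eq_zero_iff_of_nonneg fun j _ => Real.sqrt_nonneg _).mp
      (le_antisymm h (nucNorm_nonneg A)) i (mem_univ i)
  rw [← frobNorm_eq_zero, ← sq_eq_zero_iff, frobNorm_sq_eq_sum_sqSval]
  exact sum_eq_zero fun i _ => by rw [← svals_sq, hsv, zero_pow two_ne_zero]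

noncomputable def rowProj (A : Matrix (Fin p) (Fin q) ℝ) : Matrix (Fin q) (Fin q) ℝ :=
  ∑ i with sqSval A i ≠ 0, vecMulVec (rightSvec A i) (rightSvec A i)

lemma isStarProjection_rowProj (A : Matrix (Fin p) (Fin q) ℝ) : IsStarProjection (rowProj A) where
  isSelfAdjoint := by
    simp [IsSelfAdjoint, rowProj, star_eq_conjTranspose]
  isIdempotentElem := by
    rw [IsIdempotentElem, rowProj, sum_mul_sum]
    refine sum_congr rfl fun i hi => ?_
    rw [sum_eq_single i (fun j _ hji => by simp [vecMulVec_mul_vecMulVec, rightSvec_dotProduct,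
      Ne.symm hji]) (by simp [hi])]
    simp [vecMulVec_mul_vecMulVec, rightSvec_dotProduct]

lemma conjTranspose_rowProj (A : Matrix (Fin p) (Fin q) ℝ) : (rowProj A)ᴴ = rowProj A :=
  (isStarProjection_rowProj A).isSelfAdjoint

lemma mul_rowProj (A : Matrix (Fin p) (Fin q) ℝ) : A * rowProj A = A := by
  conv_rhs => rw [← sum_svdTerm A]
  simp only [rowProj, Matrix.mul_sum, mul_vecMulVec, svdTerm]
  refine sum_filter_of_ne (p := fun i => sqSval A i ≠ 0) fun i _ h => ?_
  contrapose! h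
  simp [mulVec_rightSvec_eq_zero h]

lemma rank_rowProj_le (A : Matrix (Fin p) (Fin q) ℝ) : (rowProj A).rank ≤ A.rank :=
  card_sqSval_ne_zero A ▸ rank_sum_le_card _ _ fun _ _ => rank_vecMulVec_le _ _

lemma mul_rowProj_eq_zero {r : ℕ} {A : Matrix (Fin p) (Fin q) ℝ} {B : Matrix (Fin r) (Fin q) ℝ}
    (hBA : B * Aᴴ = 0) : B * rowProj A = 0 := by
  rw [rowProj, Matrix.mul_sum]
  refine sum_eq_zero fun i hi => ?_
  rw [mul_vecMulVec, mulVec_rightSvec_eq_zero_of_mul_conjTranspose hBA (mem_filter.mp hi).2,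
    zero_vecMulVec]

noncomputable def colProj (A : Matrix (Fin p) (Fin q) ℝ) : Matrix (Fin p) (Fin p) ℝ := rowProj Aᴴ

lemma isStarProjection_colProj (A : Matrix (Fin p) (Fin q) ℝ) : IsStarProjection (colProj A) :=
  isStarProjection_rowProj Aᴴ

lemma conjTranspose_colProj (A : Matrix (Fin p) (Fin q) ℝ) : (colProj A)ᴴ = colProj A :=
  conjTranspose_rowProj Aᴴ

lemma colProj_mul (A : Matrix (Fin p) (Fin q) ℝ) : colProj A * A = A := by
  have h := congrArg conjTranspose (mul_rowProj Aᴴ)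
  rwa [conjTranspose_mul, conjTranspose_rowProj, conjTranspose_conjTranspose] at h

lemma rank_colProj_le (A : Matrix (Fin p) (Fin q) ℝ) : (colProj A).rank ≤ A.rank :=
  (rank_rowProj_le Aᴴ).trans_eq (rank_conjTranspose A)

/-! ### Nuclear norm duality -/

lemma dotProduct_le_sqrt_mul_sqrt {ι : Type*} [Fintype ι] (x y : ι → ℝ) :
    x ⬝ᵥ y ≤ √(x ⬝ᵥ x) * √(y ⬝ᵥ y) := by
  simpa [dotProduct, sq] using Real.sum_mul_le_sqrt_mul_sqrt univ x y

lemma dotProduct_mulVec_le_of_isStarProjection {P : Matrix (Fin q) (Fin q) ℝ}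
    (hP : IsStarProjection P) (x : Fin q → ℝ) : x ⬝ᵥ (P *ᵥ x) ≤ x ⬝ᵥ x := by
  have hQ := hP.one_sub
  have hnonneg : 0 ≤ x ⬝ᵥ ((1 - P) *ᵥ x) := by
    rw [← hQ.isIdempotentElem.eq, ← congrArg (· * (1 - P)) hQ.isSelfAdjoint.star_eq,
      star_eq_conjTranspose, ← mulVec_dotProduct_mulVec]
    exact sum_nonneg fun _ _ => mul_self_nonneg _
  rw [sub_mulVec, one_mulVec, dotProduct_sub] at hnonneg
  linarith

lemma frobInner_le_nucNorm {B : Matrix (Fin p) (Fin q) ℝ}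
    (hB : ∀ x, (B *ᵥ x) ⬝ᵥ (B *ᵥ x) ≤ x ⬝ᵥ x) (A : Matrix (Fin p) (Fin q) ℝ) :
    frobInner B A ≤ nucNorm A := by
  conv_lhs => rw [← sum_svdTerm A]
  rw [frobInner_sum_right]
  refine sum_le_sum fun i _ => ?_
  have hBv : √((B *ᵥ rightSvec A i) ⬝ᵥ (B *ᵥ rightSvec A i)) ≤ 1 := by
    simpa [rightSvec_dotProduct] using Real.sqrt_le_sqrt (hB (rightSvec A i))
  calc frobInner B (svdTerm A i)
      = (A *ᵥ rightSvec A i) ⬝ᵥ (B *ᵥ rightSvec A i) := by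
        rw [frobInner_comm, frobInner_svdTerm_left]
    _ ≤ √(sqSval A i) * √((B *ᵥ rightSvec A i) ⬝ᵥ (B *ᵥ rightSvec A i)) := by
        simpa [mulVec_rightSvec_dotProduct] using
          dotProduct_le_sqrt_mul_sqrt (A *ᵥ rightSvec A i) (B *ᵥ rightSvec A i)
    _ ≤ svals A i := mul_le_of_le_one_right (Real.sqrt_nonneg _) hBv

-- `∑ᵢ uᵢ vᵢᵀ` over the nonzero singular values: the junk value `0⁻¹ = 0` drops the others.
noncomputable def polarFactor (A : Matrix (Fin p) (Fin q) ℝ) : Matrix (Fin p) (Fin q) ℝ :=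
  ∑ i, (svals A i)⁻¹ • svdTerm A i

lemma polarFactor_eq_mul (A : Matrix (Fin p) (Fin q) ℝ) :
    polarFactor A = A * ∑ i, (svals A i)⁻¹ • vecMulVec (rightSvec A i) (rightSvec A i) := by
  simp [polarFactor, svdTerm, Matrix.mul_sum, mul_vecMulVec]

lemma frobInner_polarFactor_self (A : Matrix (Fin p) (Fin q) ℝ) :
    frobInner (polarFactor A) A = nucNorm A := by
  rw [polarFactor, frobInner_sum_left, nucNorm]
  refine sum_congr rfl fun i _ => ?_
  rw [frobInner_smul_left, frobInner_svdTerm_left, mulVec_rightSvec_dotProduct, if_pos rfl,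
    ← svals_sq]
  rcases eq_or_ne (svals A i) 0 with h | h
  · simp [h]
  · field_simp

lemma conjTranspose_svdTerm_mul_svdTerm (A : Matrix (Fin p) (Fin q) ℝ) (i j : Fin q) :
    (svdTerm A i)ᴴ * svdTerm A j =
      if i = j then sqSval A i • vecMulVec (rightSvec A i) (rightSvec A i) else 0 := by
  rw [svdTerm, svdTerm, conjTranspose_vecMulVec, star_trivial, star_trivial,
    vecMulVec_mul_vecMulVec, mulVec_rightSvec_dotProduct]
  split_ifs with h <;> simp [h, vecMulVec_smul]

lemma conjTranspose_polarFactor_mul_self (A : Matrix (Fin p) (Fin q) ℝ) :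
    (polarFactor A)ᴴ * polarFactor A = rowProj A := by
  rw [polarFactor, conjTranspose_sum, Matrix.sum_mul, rowProj, sum_filter]
  refine sum_congr rfl fun i _ => ?_
  have hterm : ∀ j, ((svals A i)⁻¹ • svdTerm A i)ᴴ * ((svals A j)⁻¹ • svdTerm A j) =
      ((svals A i)⁻¹ * (svals A j)⁻¹) • ((svdTerm A i)ᴴ * svdTerm A j) := fun j => by
    rw [conjTranspose_smul, star_trivial, Matrix.smul_mul, Matrix.mul_smul, smul_smul]
  simp_rw [Matrix.mul_sum, hterm, conjTranspose_svdTerm_mul_svdTerm, smul_ite, smul_zero,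
    sum_ite_eq, mem_univ, if_true, smul_smul, ← svals_sq]
  rcases eq_or_ne (svals A i) 0 with h | h
  · simp [h]
  · field_simp
    simp [h]

lemma isStarProjection_polarFactor_add {Θ C : Matrix (Fin p) (Fin q) ℝ} (h₁ : Θᴴ * C = 0)
    (h₂ : C * Θᴴ = 0) :
    IsStarProjection ((polarFactor Θ + polarFactor C)ᴴ * (polarFactor Θ + polarFactor C)) := by
  have hcross : (polarFactor Θ)ᴴ * polarFactor C = 0 := by
    rw [polarFactor_eq_mul, polarFactor_eq_mul, conjTranspose_mul, Matrix.mul_assoc,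
      ← Matrix.mul_assoc Θᴴ, h₁, Matrix.zero_mul, Matrix.mul_zero]
  have hcross' : (polarFactor C)ᴴ * polarFactor Θ = 0 := by
    rw [← conjTranspose_conjTranspose (polarFactor Θ), ← conjTranspose_mul, hcross,
      conjTranspose_zero]
  have hCΘ : C * rowProj Θ = 0 := mul_rowProj_eq_zero h₂
  have hΘC : rowProj Θ * rowProj C = 0 := mul_rowProj_eq_zero (by
    rw [← conjTranspose_rowProj, ← conjTranspose_mul, hCΘ, conjTranspose_zero])
  rw [conjTranspose_add, Matrix.add_mul, Matrix.mul_add, Matrix.mul_add, hcross, hcross',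
    add_zero, zero_add, conjTranspose_polarFactor_mul_self, conjTranspose_polarFactor_mul_self]
  exact (isStarProjection_rowProj Θ).add (isStarProjection_rowProj C) hΘC

lemma nucNorm_add_sub_nucNorm_le {Θ C : Matrix (Fin p) (Fin q) ℝ} (h₁ : Θᴴ * C = 0)
    (h₂ : C * Θᴴ = 0) (D : Matrix (Fin p) (Fin q) ℝ) :
    nucNorm Θ + nucNorm C - nucNorm D ≤ nucNorm (Θ + D + C) := by
  set W := polarFactor Θ + polarFactor C
  have hW : ∀ x, (W *ᵥ x) ⬝ᵥ (W *ᵥ x) ≤ x ⬝ᵥ x := fun x => by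
    rw [mulVec_dotProduct_mulVec]
    exact dotProduct_mulVec_le_of_isStarProjection (isStarProjection_polarFactor_add h₁ h₂) x
  have hCΘ : Cᴴ * Θ = 0 := by
    rw [← conjTranspose_conjTranspose Θ, ← conjTranspose_mul, h₁, conjTranspose_zero]
  have hWΘ : frobInner W Θ = nucNorm Θ := by
    rw [frobInner_add_left, frobInner_polarFactor_self, polarFactor_eq_mul C, frobInner_mul_left,
      hCΘ, frobInner_zero_right, add_zero]
  have hWC : frobInner W C = nucNorm C := by
    rw [frobInner_add_left, frobInner_polarFactor_self, polarFactor_eq_mul Θ, frobInner_mul_left,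
      h₁, frobInner_zero_right, zero_add]
  have hWD : -nucNorm D ≤ frobInner W D := by
    have := frobInner_le_nucNorm (B := -W) (fun x => by simpa [neg_mulVec] using hW x) D
    rw [frobInner_neg_left] at this
    linarith
  have hW_le := frobInner_le_nucNorm hW (Θ + D + C)
  rw [frobInner_add_right, frobInner_add_right, hWΘ, hWC] at hW_le
  linarith

section Tangent

-- `Δ₀` and `Δc` of the proof sketch at the top, for `Θ = Θstar`.
noncomputable def tangentPart (Θ Δ : Matrix (Fin p) (Fin q) ℝ) : Matrix (Fin p) (Fin q) ℝ :=
  colProj Θ * Δ + (1 - colProj Θ) * Δ * rowProj Θ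

noncomputable def orthPart (Θ Δ : Matrix (Fin p) (Fin q) ℝ) : Matrix (Fin p) (Fin q) ℝ :=
  (1 - colProj Θ) * Δ * (1 - rowProj Θ)

variable (Θ Δ : Matrix (Fin p) (Fin q) ℝ)

lemma tangentPart_add_orthPart : tangentPart Θ Δ + orthPart Θ Δ = Δ := by
  simp only [tangentPart, orthPart, Matrix.mul_sub, Matrix.sub_mul, Matrix.mul_one, Matrix.one_mul]
  abel

lemma rank_tangentPart_le : (tangentPart Θ Δ).rank ≤ 2 * Θ.rank := by
  have h₁ := (rank_mul_le_left (colProj Θ) Δ).trans (rank_colProj_le Θ)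
  have h₂ := (rank_mul_le_right ((1 - colProj Θ) * Δ) (rowProj Θ)).trans (rank_rowProj_le Θ)
  exact (rank_add_le _ _).trans (by omega)

lemma conjTranspose_mul_orthPart : Θᴴ * orthPart Θ Δ = 0 := by
  have h : Θᴴ * (1 - colProj Θ) = 0 := by
    rw [← conjTranspose_colProj, ← conjTranspose_one, ← conjTranspose_sub, ← conjTranspose_mul,
      Matrix.sub_mul, Matrix.one_mul, colProj_mul, sub_self, conjTranspose_zero]
  rw [orthPart, ← Matrix.mul_assoc, ← Matrix.mul_assoc, h, Matrix.zero_mul, Matrix.zero_mul]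

lemma orthPart_mul_conjTranspose : orthPart Θ Δ * Θᴴ = 0 := by
  have h : (1 - rowProj Θ) * Θᴴ = 0 := by
    rw [← conjTranspose_rowProj, ← conjTranspose_one, ← conjTranspose_sub, ← conjTranspose_mul,
      Matrix.mul_sub, Matrix.mul_one, mul_rowProj, sub_self, conjTranspose_zero]
  rw [orthPart, Matrix.mul_assoc, h, Matrix.mul_zero]

lemma colProj_mul_orthPart : colProj Θ * orthPart Θ Δ = 0 := by
  rw [orthPart, ← Matrix.mul_assoc, ← Matrix.mul_assoc,
    (isStarProjection_colProj Θ).mul_one_sub_self, Matrix.zero_mul, Matrix.zero_mul]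

lemma orthPart_mul_rowProj : orthPart Θ Δ * rowProj Θ = 0 := by
  rw [orthPart, Matrix.mul_assoc, (isStarProjection_rowProj Θ).one_sub_mul_self, Matrix.mul_zero]

lemma frobInner_tangentPart_eq_zero {Y : Matrix (Fin p) (Fin q) ℝ} (hY₁ : colProj Θ * Y = 0)
    (hY₂ : Y * rowProj Θ = 0) : frobInner (tangentPart Θ Δ) Y = 0 := by
  rw [tangentPart, frobInner_add_left, frobInner_mul_left, frobInner_mul_right,
    conjTranspose_colProj, conjTranspose_rowProj, hY₁, hY₂,
    frobInner_zero_right, frobInner_zero_right, add_zero]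

lemma nucNorm_orthPart_le (h : nucNorm (Θ + Δ) ≤ nucNorm Θ) :
    nucNorm (orthPart Θ Δ) ≤ nucNorm (tangentPart Θ Δ) := by
  have := nucNorm_add_sub_nucNorm_le (conjTranspose_mul_orthPart Θ Δ)
    (orthPart_mul_conjTranspose Θ Δ) (tangentPart Θ Δ)
  rw [add_assoc, tangentPart_add_orthPart] at this
  linarith

end Tangent

/-! ### Blocks of sorted singular values -/

lemma sum_range_sum_Ico_mul {M : Type*} [AddCommMonoid M] (f : ℕ → M) (t m : ℕ) :
    ∑ k ∈ range m, ∑ j ∈ Ico (k * t) ((k + 1) * t), f j = ∑ j ∈ range (m * t), f j := by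
  induction m with
  | zero => simp
  | succ m ih => rw [sum_range_succ, ih, sum_range_add_sum_Ico _ (by nlinarith)]

lemma card_Ico_mul (t k : ℕ) : #(Ico (k * t) ((k + 1) * t)) = t := by
  rw [Nat.card_Ico, add_mul, one_mul, Nat.add_sub_cancel_left]

lemma sqrt_mul_sqrt_sum_sq_Ico_le {τ : ℕ → ℝ} (hτ : Antitone τ) (hτ0 : ∀ j, 0 ≤ τ j) (t k : ℕ) :
    √t * √(∑ j ∈ Ico ((k + 1) * t) ((k + 1 + 1) * t), τ j ^ 2) ≤
      ∑ j ∈ Ico (k * t) ((k + 1) * t), τ j := by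
  rcases Nat.eq_zero_or_pos t with rfl | ht
  · simp
  set W := ∑ j ∈ Ico (k * t) ((k + 1) * t), τ j
  have hW : ∀ j ∈ Ico ((k + 1) * t) ((k + 1 + 1) * t), t * τ j ≤ W := fun j hj => by
    calc t * τ j = ∑ _i ∈ Ico (k * t) ((k + 1) * t), τ j := by
          rw [sum_const, card_Ico_mul, nsmul_eq_mul]
      _ ≤ W := sum_le_sum fun i hi => hτ (by rw [mem_Ico] at hi hj; omega)
  have htR : (0 : ℝ) < t := by exact_mod_cast ht
  have hsq : t * ∑ j ∈ Ico ((k + 1) * t) ((k + 1 + 1) * t), τ j ^ 2 ≤ W ^ 2 := by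
    refine le_of_mul_le_mul_left ?_ htR
    calc t * (t * ∑ j ∈ Ico ((k + 1) * t) ((k + 1 + 1) * t), τ j ^ 2)
        = ∑ j ∈ Ico ((k + 1) * t) ((k + 1 + 1) * t), (t * τ j) ^ 2 := by
          rw [← mul_assoc, mul_sum]
          exact sum_congr rfl fun j _ => by ring
      _ ≤ ∑ _j ∈ Ico ((k + 1) * t) ((k + 1 + 1) * t), W ^ 2 :=
          sum_le_sum fun j hj => pow_le_pow_left₀ (mul_nonneg htR.le (hτ0 j)) (hW j hj) 2
      _ = t * W ^ 2 := by rw [sum_const, card_Ico_mul, nsmul_eq_mul]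
  rw [← Real.sqrt_mul (Nat.cast_nonneg t)]
  exact (Real.sqrt_le_sqrt hsq).trans_eq (Real.sqrt_sq (sum_nonneg fun j _ => hτ0 j))

section Blocks

noncomputable def sortPerm (A : Matrix (Fin p) (Fin q) ℝ) : Equiv.Perm (Fin q) :=
  Tuple.sort fun i => -svals A i

-- Indexed by `ℕ` and padded with zeros, so that a block of `t` consecutive singular values is an
-- interval `Ico (k * t) ((k + 1) * t)`.
noncomputable def sortedSval (A : Matrix (Fin p) (Fin q) ℝ) (j : ℕ) : ℝ :=
  if h : j < q then svals A (sortPerm A ⟨j, h⟩) else 0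

noncomputable def sortedTerm (A : Matrix (Fin p) (Fin q) ℝ) (j : ℕ) : Matrix (Fin p) (Fin q) ℝ :=
  if h : j < q then svdTerm A (sortPerm A ⟨j, h⟩) else 0

variable (A : Matrix (Fin p) (Fin q) ℝ)

lemma sortedSval_nonneg (j : ℕ) : 0 ≤ sortedSval A j := by
  unfold sortedSval
  split_ifs
  exacts [Real.sqrt_nonneg _, le_rfl]

lemma sortedSval_antitone : Antitone (sortedSval A) := by
  intro j j' hjj'
  unfold sortedSval
  split_ifs with h' h
  · exact neg_le_neg_iff.mp <|
      Tuple.monotone_sort (fun i => -svals A i) (show (⟨j, h⟩ : Fin q) ≤ ⟨j', h'⟩ from hjj')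
  · omega
  · exact Real.sqrt_nonneg _
  · exact le_rfl

lemma sum_range_sortedSval_le_nucNorm (M : ℕ) : ∑ j ∈ range M, sortedSval A j ≤ nucNorm A := by
  calc ∑ j ∈ range M, sortedSval A j = ∑ j ∈ range M with j < q, sortedSval A j :=
        (sum_filter_of_ne fun j _ h => by contrapose! h; simp [sortedSval, h]).symm
    _ ≤ ∑ j ∈ range q, sortedSval A j :=
        sum_le_sum_of_subset_of_nonneg (fun j hj => by simp at hj ⊢; omega)
          fun j _ _ => sortedSval_nonneg A j
    _ = nucNorm A := by
        rw [sum_range, nucNorm, ← Equiv.sum_comp (sortPerm A) (svals A)]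
        simp [sortedSval]

lemma sum_range_sortedTerm {M : ℕ} (hM : q ≤ M) : ∑ j ∈ range M, sortedTerm A j = A := by
  calc ∑ j ∈ range M, sortedTerm A j = ∑ j ∈ range q, sortedTerm A j :=
        (sum_subset (range_subset_range.mpr hM) fun j _ hj => by simp_all [sortedTerm]).symm
    _ = ∑ i, svdTerm A (sortPerm A i) := by simp [sum_range, sortedTerm]
    _ = A := by rw [Equiv.sum_comp (sortPerm A) (svdTerm A), sum_svdTerm]

lemma frobInner_sortedTerm (j j' : ℕ) :
    frobInner (sortedTerm A j) (sortedTerm A j') = if j = j' then sortedSval A j ^ 2 else 0 := by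
  unfold sortedTerm sortedSval
  by_cases hjj : j = j'
  · subst hjj
    rw [if_pos rfl]
    split_ifs with h
    · rw [frobInner_svdTerm_svdTerm, if_pos rfl, svals_sq]
    · simp [frobInner]
  · rw [if_neg hjj]
    split_ifs with h h'
    · rw [frobInner_svdTerm_svdTerm, if_neg]
      simpa [Fin.ext_iff] using hjj
    all_goals simp [frobInner]

lemma rank_sortedTerm_le (j : ℕ) : (sortedTerm A j).rank ≤ 1 := by
  unfold sortedTerm
  split_ifs
  exacts [rank_svdTerm_le _ _, by simp]

lemma mul_sortedTerm_eq_zero {r : ℕ} {P : Matrix (Fin r) (Fin p) ℝ} (hP : P * A = 0) (j : ℕ) :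
    P * sortedTerm A j = 0 := by
  unfold sortedTerm
  split_ifs
  · rw [svdTerm, ← mul_vecMulVec, ← Matrix.mul_assoc, hP, Matrix.zero_mul]
  · exact Matrix.mul_zero P

lemma sortedTerm_mul_eq_zero {r : ℕ} {Q : Matrix (Fin q) (Fin r) ℝ} (hQ : A * Q = 0) (j : ℕ) :
    sortedTerm A j * Q = 0 := by
  unfold sortedTerm
  split_ifs
  · rw [svdTerm_eq_mul_self, Matrix.mul_assoc, hQ, Matrix.mul_zero]
  · exact Matrix.zero_mul Q

-- `svdBlock (orthPart Θ Δ) t k` is the block `Δₖ₊₁` of the proof sketch.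
noncomputable def svdBlock (t k : ℕ) : Matrix (Fin p) (Fin q) ℝ :=
  ∑ j ∈ Ico (k * t) ((k + 1) * t), sortedTerm A j

lemma frobNorm_svdBlock (t k : ℕ) :
    frobNorm (svdBlock A t k) = √(∑ j ∈ Ico (k * t) ((k + 1) * t), sortedSval A j ^ 2) := by
  rw [← Real.sqrt_sq (frobNorm_nonneg _), frobNorm_sq, svdBlock, frobInner_sum_left]
  congr 1
  refine sum_congr rfl fun j hj => ?_
  simp_rw [frobInner_sum_right, frobInner_sortedTerm, sum_ite_eq, if_pos hj]

lemma rank_svdBlock_le (t k : ℕ) : (svdBlock A t k).rank ≤ t :=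
  (rank_sum_le_card _ _ fun j _ => rank_sortedTerm_le A j).trans_eq (card_Ico_mul t k)

lemma svdBlock_add_sum_svdBlock {t : ℕ} (ht : 0 < t) :
    svdBlock A t 0 + ∑ k ∈ range q, svdBlock A t (k + 1) = A := by
  rw [add_comm, ← sum_range_succ' (svdBlock A t)]
  unfold svdBlock
  rw [sum_range_sum_Ico_mul, sum_range_sortedTerm A (by nlinarith)]

lemma sqrt_mul_sum_frobNorm_svdBlock_le (t : ℕ) :
    √t * ∑ k ∈ range q, frobNorm (svdBlock A t (k + 1)) ≤ nucNorm A := by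
  rw [mul_sum]
  calc ∑ k ∈ range q, √t * frobNorm (svdBlock A t (k + 1))
      ≤ ∑ k ∈ range q, ∑ j ∈ Ico (k * t) ((k + 1) * t), sortedSval A j :=
        sum_le_sum fun k _ => frobNorm_svdBlock A t (k + 1) ▸
          sqrt_mul_sqrt_sum_sq_Ico_le (sortedSval_antitone A) (sortedSval_nonneg A) t k
    _ = ∑ j ∈ range (q * t), sortedSval A j := sum_range_sum_Ico_mul _ t q
    _ ≤ nucNorm A := sum_range_sortedSval_le_nucNorm A _

lemma mul_svdBlock_eq_zero {r : ℕ} {P : Matrix (Fin r) (Fin p) ℝ} (hP : P * A = 0) (t k : ℕ) :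
    P * svdBlock A t k = 0 := by
  rw [svdBlock, Matrix.mul_sum]
  exact sum_eq_zero fun j _ => mul_sortedTerm_eq_zero A hP j

lemma svdBlock_mul_eq_zero {r : ℕ} {Q : Matrix (Fin q) (Fin r) ℝ} (hQ : A * Q = 0) (t k : ℕ) :
    svdBlock A t k * Q = 0 := by
  rw [svdBlock, Matrix.sum_mul]
  exact sum_eq_zero fun j _ => sortedTerm_mul_eq_zero A hQ j

end Blocks

lemma frobNorm_tangentPart_le_frobNorm_add_svdBlock (Θ Δ : Matrix (Fin p) (Fin q) ℝ) (t k : ℕ) :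
    frobNorm (tangentPart Θ Δ) ≤ frobNorm (tangentPart Θ Δ + svdBlock (orthPart Θ Δ) t k) :=
  frobNorm_le_frobNorm_add <| frobInner_tangentPart_eq_zero Θ Δ
    (mul_svdBlock_eq_zero _ (colProj_mul_orthPart Θ Δ) t k)
    (svdBlock_mul_eq_zero _ (orthPart_mul_rowProj Θ Δ) t k)

/-! ### The restricted isometry argument -/

lemma weakRIP_mul_frobNorm_le_sum {N n d R : ℕ} {Z : Matrix (Fin N) (Fin d) ℝ} {δ K₁ K₂ : ℝ}
    (hRIP : WeakRIP Z n R δ K₁ K₂) {ι : Type*} {s : Finset ι} {H : Matrix (Fin d) (Fin n) ℝ}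
    {B : ι → Matrix (Fin d) (Fin n) ℝ} (hZ : Z * (H + ∑ k ∈ s, B k) = 0) (hH : H.rank ≤ R)
    (hB : ∀ k ∈ s, (B k).rank ≤ R) :
    K₁ * (1 - δ) * frobNorm H ≤ K₂ * (1 + δ) * ∑ k ∈ s, frobNorm (B k) := by
  rw [Matrix.mul_add, Matrix.mul_sum] at hZ
  calc K₁ * (1 - δ) * frobNorm H ≤ frobNorm (Z * H) / √N := (hRIP H hH).1
    _ ≤ (∑ k ∈ s, frobNorm (Z * B k)) / √N := by
        rw [eq_neg_of_add_eq_zero_left hZ, frobNorm_neg]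
        gcongr
        exact frobNorm_sum_le _ _
    _ = ∑ k ∈ s, frobNorm (Z * B k) / √N := sum_div _ _ _
    _ ≤ ∑ k ∈ s, K₂ * (1 + δ) * frobNorm (B k) :=
        sum_le_sum fun k hk => (hRIP (B k) (hB k hk)).2
    _ = K₂ * (1 + δ) * ∑ k ∈ s, frobNorm (B k) := (mul_sum _ _ _).symm

section WeakRIP

variable {N n d r t : ℕ} {Z : Matrix (Fin N) (Fin d) ℝ} {δ K₁ K₂ : ℝ}
  {Θ Δ : Matrix (Fin d) (Fin n) ℝ}

lemma mul_frobNorm_le_mul_frobNorm_of_weakRIP (hΘ : Θ.rank ≤ r) (ht : 0 < t)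
    (hRIP : WeakRIP Z n (2 * r + t) δ K₁ K₂) (hK : 0 ≤ K₂ * (1 + δ)) (hZΔ : Z * Δ = 0)
    (hcone : nucNorm (orthPart Θ Δ) ≤ nucNorm (tangentPart Θ Δ)) :
    K₁ * (1 - δ) * √t * frobNorm (tangentPart Θ Δ + svdBlock (orthPart Θ Δ) t 0) ≤
      K₂ * (1 + δ) * √(2 * r) * frobNorm (tangentPart Θ Δ + svdBlock (orthPart Θ Δ) t 0) := by
  set T := tangentPart Θ Δ
  set C := orthPart Θ Δ
  set H := T + svdBlock C t 0
  have hT : T.rank ≤ 2 * r := (rank_tangentPart_le Θ Δ).trans (by omega)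
  have hZH : Z * (H + ∑ k ∈ range n, svdBlock C t (k + 1)) = 0 := by
    rwa [add_assoc, svdBlock_add_sum_svdBlock C ht, tangentPart_add_orthPart]
  have hRIPH := weakRIP_mul_frobNorm_le_sum hRIP hZH
    ((rank_add_le _ _).trans (add_le_add hT (rank_svdBlock_le C t 0)))
    fun k _ => (rank_svdBlock_le C t _).trans (by omega)
  have hnucT : nucNorm T ≤ √(2 * r) * frobNorm T :=
    (nucNorm_le_sqrt_rank_mul_frobNorm T).trans <|
      mul_le_mul_of_nonneg_right (Real.sqrt_le_sqrt (by exact_mod_cast hT)) (frobNorm_nonneg T)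
  have hTH : frobNorm T ≤ frobNorm H := frobNorm_tangentPart_le_frobNorm_add_svdBlock Θ Δ t 0
  calc K₁ * (1 - δ) * √t * frobNorm H = √t * (K₁ * (1 - δ) * frobNorm H) := by ring
    _ ≤ √t * (K₂ * (1 + δ) * ∑ k ∈ range n, frobNorm (svdBlock C t (k + 1))) := by gcongr
    _ = K₂ * (1 + δ) * (√t * ∑ k ∈ range n, frobNorm (svdBlock C t (k + 1))) := by ring
    _ ≤ K₂ * (1 + δ) * nucNorm T := by
        gcongr
        exact (sqrt_mul_sum_frobNorm_svdBlock_le C t).trans hcone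
    _ ≤ K₂ * (1 + δ) * √(2 * r) * frobNorm H := by
        rw [mul_assoc _ √(2 * r)]
        exact mul_le_mul_of_nonneg_left
          (hnucT.trans (mul_le_mul_of_nonneg_left hTH (Real.sqrt_nonneg _))) hK

lemma eq_zero_of_weakRIP (hΘ : Θ.rank ≤ r) (ht : 0 < t)
    (hRIP : WeakRIP Z n (2 * r + t) δ K₁ K₂) (hK : 0 ≤ K₂ * (1 + δ))
    (hratio : K₂ * (1 + δ) * √(2 * r) < K₁ * (1 - δ) * √t) (hZΔ : Z * Δ = 0)
    (hcone : nucNorm (orthPart Θ Δ) ≤ nucNorm (tangentPart Θ Δ)) : Δ = 0 := by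
  have hH := mul_frobNorm_le_mul_frobNorm_of_weakRIP hΘ ht hRIP hK hZΔ hcone
  have hH0 : frobNorm (tangentPart Θ Δ + svdBlock (orthPart Θ Δ) t 0) ≤ 0 := by
    nlinarith [frobNorm_nonneg (tangentPart Θ Δ + svdBlock (orthPart Θ Δ) t 0)]
  have hT0 : tangentPart Θ Δ = 0 := frobNorm_eq_zero.mp <| le_antisymm
    ((frobNorm_tangentPart_le_frobNorm_add_svdBlock Θ Δ t 0).trans hH0) (frobNorm_nonneg _)
  have hC0 : orthPart Θ Δ = 0 := eq_zero_of_nucNorm_nonpos <| hcone.trans <|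
    (nucNorm_le_sqrt_rank_mul_frobNorm _).trans_eq (by rw [hT0, frobNorm_eq_zero.mpr rfl, mul_zero])
  rw [← tangentPart_add_orthPart Θ Δ, hT0, hC0, add_zero]

end WeakRIP

lemma sq_le_mul_sq_of_eq_ite {K₁ K₂ : ℝ} {s : ℕ} (hK₁ : 0 < K₁)
    (hs : s = if K₁ = K₂ then 1 else ⌊(K₂ / K₁) ^ 2⌋₊ + 1) : K₂ ^ 2 ≤ s * K₁ ^ 2 := by
  split_ifs at hs with h
  · simp [hs, h]
  · have hK₂ : K₂ ^ 2 = (K₂ / K₁) ^ 2 * K₁ ^ 2 := by field_simp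
    rw [hs, hK₂]
    push_cast
    exact mul_le_mul_of_nonneg_right (Nat.lt_floor_add_one _).le (sq_nonneg _)

lemma two_mul_one_add_sq_lt {δ : ℝ} (hδ : δ < 5 - 2 * √6) : 2 * (1 + δ) ^ 2 < 3 * (1 - δ) ^ 2 := by
  have h6 : √6 ^ 2 = 6 := Real.sq_sqrt (by norm_num)
  have hpos : 0 < (5 - δ - 2 * √6) * (5 - δ + 2 * √6) :=
    mul_pos (by linarith) (by linarith [Real.sqrt_nonneg 6])
  nlinarith

lemma mul_sqrt_two_mul_lt_mul_sqrt_three_mul {K₁ K₂ δ : ℝ} {r s : ℕ} (hK₁ : 0 < K₁) (hr : 0 < r)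
    (hs : 0 < s) (hδ : δ < 5 - 2 * √6) (hKs : K₂ ^ 2 ≤ s * K₁ ^ 2) :
    K₂ * (1 + δ) * √(2 * r) < K₁ * (1 - δ) * √(3 * s * r) := by
  have hδ1 : δ < 1 := by nlinarith [Real.sq_sqrt (show (0 : ℝ) ≤ 6 by norm_num), Real.sqrt_nonneg 6]
  refine lt_of_pow_lt_pow_left₀ 2 (by have := sub_pos.mpr hδ1; positivity) ?_
  have hr' : (0 : ℝ) < r := by exact_mod_cast hr
  have hs' : (0 : ℝ) < s := by exact_mod_cast hs
  calc (K₂ * (1 + δ) * √(2 * r)) ^ 2 = K₂ ^ 2 * (2 * (1 + δ) ^ 2) * r := by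
        rw [mul_pow, mul_pow, Real.sq_sqrt (by positivity)]
        ring
    _ ≤ s * K₁ ^ 2 * (2 * (1 + δ) ^ 2) * r := by gcongr
    _ < s * K₁ ^ 2 * (3 * (1 - δ) ^ 2) * r :=
        mul_lt_mul_of_pos_right
          (mul_lt_mul_of_pos_left (two_mul_one_add_sq_lt hδ) (by positivity)) hr'
    _ = (K₁ * (1 - δ) * √(3 * s * r)) ^ 2 := by
        rw [mul_pow, mul_pow, Real.sq_sqrt (by positivity)]
        ring

end LowRankRecovery

open LowRankRecovery in
/-- under the weak RIP of order (2+3s)r with constant δ < 5 − 2√6, any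
nuclear-norm minimizer (indeed any feasible matrix with nuclear norm at most that of Θ*)
of the noiseless problem equals Θ*. -/
theorem exact_recovery_of_weakRIP {N n m : ℕ} (r : ℕ) (hr : 1 ≤ r)
    (Θstar : Matrix (Fin (n + m)) (Fin n) ℝ) (hrank : Θstar.rank = r)
    (Z : Matrix (Fin N) (Fin (n + m)) ℝ)
    (X : Matrix (Fin N) (Fin n) ℝ) (hX : X = Z * Θstar)
    (K₁ K₂ δ : ℝ) (hK₁ : 0 < K₁) (hK : K₁ ≤ K₂)
    (s : ℕ) (hs : s = if K₁ = K₂ then 1 else ⌊(K₂ / K₁) ^ 2⌋₊ + 1)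
    (hδ0 : 0 < δ) (hδ : δ < 5 - 2 * Real.sqrt 6)
    (hRIP : WeakRIP Z n ((2 + 3 * s) * r) δ K₁ K₂)
    (Θhat : Matrix (Fin (n + m)) (Fin n) ℝ)
    (hfeas : Z * Θhat = X) (hnuc : nucNorm Θhat ≤ nucNorm Θstar) :
    Θhat = Θstar := by
  have hs0 : 0 < s := by split_ifs at hs <;> omega
  have hZΔ : Z * (Θhat - Θstar) = 0 := by rw [Matrix.mul_sub, hfeas, hX, sub_self]
  have hcone := nucNorm_orthPart_le Θstar (Θhat - Θstar) (by rwa [add_sub_cancel])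
  have hRIP' : WeakRIP Z n (2 * r + 3 * s * r) δ K₁ K₂ := by convert hRIP using 2; ring
  have hK₂δ : 0 ≤ K₂ * (1 + δ) := mul_nonneg (hK₁.le.trans hK) (by linarith)
  have hratio : K₂ * (1 + δ) * √(2 * r) < K₁ * (1 - δ) * √(3 * s * r : ℕ) := by
    exact_mod_cast mul_sqrt_two_mul_lt_mul_sqrt_three_mul hK₁ hr hs0 hδ
      (sq_le_mul_sq_of_eq_ite hK₁ hs)
  exact sub_eq_zero.mp <| eq_zero_of_weakRIP hrank.le (Nat.mul_pos (by omega) hr) hRIP' hK₂δ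
    hratio hZΔ hcone
end

section
/- Let U ∈ ℝ^{(n+m)×r} and V ∈ ℝ^{n×r} have orthonormal columns. Suppose A ∈ ℝ^{(n+m)×n} satisfies A = U Uᵀ A V Vᵀ (its column space lies in the span of the columns of U and its row space lies in the span of the columns of V), and B ∈ ℝ^{(n+m)×n} satisfies UᵀB = 0 and B V = 0 (its column space is orthogonal to the columns of U and its row space is orthogonal to the columns of V). Then ‖A + B‖_nuc = ‖A‖_nuc + ‖B‖_nuc. -/
open MeasureTheory ProbabilityTheory Matrix Real

/-!
The nuclear norm of `M` is `tr √(Mᴴ M)`. The hypotheses give `Aᵀ B = 0` and `A Bᵀ = 0`, so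
the Gram matrix of `A + B` is `AᵀA + BᵀB`. Positive semidefinite matrices with zero product
have square roots with zero product, hence `√(AᵀA + BᵀB) = √(AᵀA) + √(BᵀB)`, and the trace is
additive.
-/

open scoped MatrixOrder ComplexOrder

namespace Matrix

variable {n 𝕜 : Type*} [Fintype n] [DecidableEq n] [RCLike 𝕜]

theorem PosSemidef.trace_sqrt {A : Matrix n n 𝕜} (hA : A.PosSemidef) :
    (CFC.sqrt A).trace = ∑ i, (√(hA.1.eigenvalues i) : 𝕜) := by
  rw [CFC.sqrt_eq_cfc, cfc_nnreal_eq_real _ A, hA.1.cfc_eq, IsHermitian.cfc,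
    Unitary.conjStarAlgAut_apply, trace_mul_cycle, Unitary.coe_star_mul_self, Matrix.one_mul]
  simp [trace_diagonal, hA.eigenvalues_nonneg]

theorem sqrt_add_of_mul_eq_zero {A B : Matrix n n 𝕜} (hA : 0 ≤ A) (hB : 0 ≤ B)
    (hAB : A * B = 0) : CFC.sqrt (A + B) = CFC.sqrt A + CFC.sqrt B := by
  set S := CFC.sqrt A
  set T := CFC.sqrt B
  have hS : Sᴴ = S := (CFC.sqrt_nonneg A).posSemidef.isHermitian
  have hT : Tᴴ = T := (CFC.sqrt_nonneg B).posSemidef.isHermitian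
  -- `(Sᴴ S) (T Tᴴ) = A B = 0`, and a Gram factor can be cancelled from a zero product.
  have hST : S * T = 0 := by
    rw [← mul_self_mul_conjTranspose_eq_zero, ← conjTranspose_mul_self_mul_eq_zero, hS, hT,
      CFC.sqrt_mul_sqrt_self A, CFC.sqrt_mul_sqrt_self B, hAB]
  have hTS : T * S = 0 := by rw [← hS, ← hT, ← conjTranspose_mul, hST, conjTranspose_zero]
  refine CFC.sqrt_unique ?_ (add_nonneg (CFC.sqrt_nonneg A) (CFC.sqrt_nonneg B))
  rw [Matrix.add_mul, Matrix.mul_add, Matrix.mul_add, hST, hTS, CFC.sqrt_mul_sqrt_self A,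
    CFC.sqrt_mul_sqrt_self B, add_zero, zero_add]

end Matrix

theorem nucNorm_eq_trace_sqrt {p q : ℕ} (M : Matrix (Fin p) (Fin q) ℝ) :
    nucNorm M = (CFC.sqrt (Mᴴ * M)).trace := by
  rw [(posSemidef_conjTranspose_mul_self M).trace_sqrt]
  rfl

theorem nucNorm_add_of_orthogonal {p q : ℕ} {M N : Matrix (Fin p) (Fin q) ℝ}
    (hMtN : Mᵀ * N = 0) (hMNt : M * Nᵀ = 0) : nucNorm (M + N) = nucNorm M + nucNorm N := by
  simp only [← conjTranspose_eq_transpose_of_trivial] at hMtN hMNt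
  have hNM : Nᴴ * M = 0 := by
    rw [← conjTranspose_conjTranspose M, ← conjTranspose_mul, hMtN, conjTranspose_zero]
  have hgram : (M + N)ᴴ * (M + N) = Mᴴ * M + Nᴴ * N := by
    rw [conjTranspose_add, Matrix.add_mul, Matrix.mul_add, Matrix.mul_add, hMtN, hNM, add_zero,
      zero_add]
  have hgram_mul : (Mᴴ * M) * (Nᴴ * N) = 0 := by
    rw [Matrix.mul_assoc, ← Matrix.mul_assoc M, hMNt, Matrix.zero_mul, Matrix.mul_zero]
  rw [nucNorm_eq_trace_sqrt, nucNorm_eq_trace_sqrt, nucNorm_eq_trace_sqrt, hgram,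
    sqrt_add_of_mul_eq_zero (posSemidef_conjTranspose_mul_self M).nonneg
      (posSemidef_conjTranspose_mul_self N).nonneg hgram_mul, trace_add]

theorem nucNorm_decomposable_general {n m r : ℕ}
    (U : Matrix (Fin (n + m)) (Fin r) ℝ) (V : Matrix (Fin n) (Fin r) ℝ)
    (A B : Matrix (Fin (n + m)) (Fin n) ℝ)
    (hA : A = U * Uᵀ * A * (V * Vᵀ)) (hB1 : Uᵀ * B = 0) (hB2 : B * V = 0) :
    nucNorm (A + B) = nucNorm A + nucNorm B := by
  refine nucNorm_add_of_orthogonal ?_ ?_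
  · rw [hA]
    simp only [transpose_mul, transpose_transpose, Matrix.mul_assoc, hB1, Matrix.mul_zero]
  · rw [hA]
    simp only [Matrix.mul_assoc, ← transpose_mul, hB2, transpose_zero, Matrix.mul_zero]

/-- decomposability of the nuclear norm. If the row/column spaces of A lie in
the spans of the columns of V and U respectively, and those of B are orthogonal to them,
then ‖A + B‖_nuc = ‖A‖_nuc + ‖B‖_nuc. -/
theorem nucNorm_decomposable {n m r : ℕ}
    (U : Matrix (Fin (n + m)) (Fin r) ℝ) (V : Matrix (Fin n) (Fin r) ℝ)
    (hU : Uᵀ * U = 1) (hV : Vᵀ * V = 1)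
    (A B : Matrix (Fin (n + m)) (Fin n) ℝ)
    (hA : A = U * Uᵀ * A * (V * Vᵀ)) (hB1 : Uᵀ * B = 0) (hB2 : B * V = 0) :
    nucNorm (A + B) = nucNorm A + nucNorm B :=
  nucNorm_decomposable_general U V A B hA hB1 hB2
end

section
/- Let X ∈ ℝ^{N×n}, Z ∈ ℝ^{N×(n+m)} be fixed matrices, let Θ* ∈ ℝ^{(n+m)×n} have rank r with singular value decomposition Θ* = U D Vᵀ, let Θ̂ be a global minimizer of L_N(Θ) + λ_N‖Θ‖_nuc, and set Δ̂ := Θ̂ − Θ*. If λ_N ≥ 2‖∇L_N(Θ*)‖_op, then ‖Δ̂_{M̄⊥}‖_nuc ≤ 3‖Δ̂_{M̄}‖_nuc (a cone constraint, where Δ̂_{M̄} has rank at most 2r) and consequently ‖Δ̂‖_nuc ≤ 4√(2r)·‖Δ̂‖_F. -/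
open MeasureTheory ProbabilityTheory Matrix Real

/-- The least-squares loss L_N(Θ) = (1/(2N)) ‖X − ZΘ‖_F². -/
noncomputable def lossFn {N n d : ℕ} (X : Matrix (Fin N) (Fin n) ℝ)
    (Z : Matrix (Fin N) (Fin d) ℝ) (Θ : Matrix (Fin d) (Fin n) ℝ) : ℝ :=
  (1 / (2 * (N : ℝ))) * (frobNorm (X - Z * Θ)) ^ 2

/-- The gradient of the least-squares loss: ∇L_N(Θ) = (1/N) Zᵀ(ZΘ − X). -/
noncomputable def gradFn {N n d : ℕ} (X : Matrix (Fin N) (Fin n) ℝ)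
    (Z : Matrix (Fin N) (Fin d) ℝ) (Θ : Matrix (Fin d) (Fin n) ℝ) : Matrix (Fin d) (Fin n) ℝ :=
  (1 / (N : ℝ)) • (Zᵀ * (Z * Θ - X))

namespace ConeCS


variable {p q : ℕ}

noncomputable def eigW (A : Matrix (Fin p) (Fin q) ℝ) : Matrix (Fin q) (Fin q) ℝ :=
  ((Matrix.isHermitian_conjTranspose_mul_self A).eigenvectorUnitary : Matrix (Fin q) (Fin q) ℝ)

noncomputable def eigL (A : Matrix (Fin p) (Fin q) ℝ) : Fin q → ℝ :=
  (Matrix.isHermitian_conjTranspose_mul_self A).eigenvalues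

lemma eigW_mul_star (A : Matrix (Fin p) (Fin q) ℝ) : eigW A * (eigW A)ᴴ = 1 := by
  have := Matrix.mem_unitaryGroup_iff.mp
    ((Matrix.isHermitian_conjTranspose_mul_self A).eigenvectorUnitary).2
  simpa [Matrix.star_eq_conjTranspose, eigW] using this

lemma star_mul_eigW (A : Matrix (Fin p) (Fin q) ℝ) : (eigW A)ᴴ * eigW A = 1 := by
  have := Matrix.mem_unitaryGroup_iff'.mp
    ((Matrix.isHermitian_conjTranspose_mul_self A).eigenvectorUnitary).2
  simpa [Matrix.star_eq_conjTranspose, eigW] using this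

lemma spectral (A : Matrix (Fin p) (Fin q) ℝ) :
    Aᴴ * A = eigW A * Matrix.diagonal (eigL A) * (eigW A)ᴴ := by
  have := (Matrix.isHermitian_conjTranspose_mul_self A).spectral_theorem
  simpa [Matrix.star_eq_conjTranspose, eigW, eigL, RCLike.ofReal_real_eq_id] using this

lemma eigL_nonneg (A : Matrix (Fin p) (Fin q) ℝ) (j : Fin q) : 0 ≤ eigL A j :=
  (Matrix.posSemidef_conjTranspose_mul_self A).eigenvalues_nonneg j


/-- column of eigW -/
noncomputable def colW (A : Matrix (Fin p) (Fin q) ℝ) (j : Fin q) : Fin q → ℝ := fun i => eigW A i j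

lemma colW_dot (A : Matrix (Fin p) (Fin q) ℝ) (j k : Fin q) :
    colW A j ⬝ᵥ colW A k = (1 : Matrix (Fin q) (Fin q) ℝ) j k := by
  rw [← star_mul_eigW A]
  simp [colW, Matrix.mul_apply, Matrix.conjTranspose_apply, dotProduct, mul_comm]

lemma mulVec_colW (A : Matrix (Fin p) (Fin q) ℝ) (j : Fin q) :
    (Aᴴ * A) *ᵥ colW A j = eigL A j • colW A j := by
  have h := (Matrix.isHermitian_conjTranspose_mul_self A).mulVec_eigenvectorBasis j
  have hc : colW A j = ⇑((Matrix.isHermitian_conjTranspose_mul_self A).eigenvectorBasis j) := by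
    funext i
    exact ((Matrix.isHermitian_conjTranspose_mul_self A).eigenvectorUnitary_apply i j)
  rw [hc]
  exact h

lemma quad_eigL (A : Matrix (Fin p) (Fin q) ℝ) (j : Fin q) :
    colW A j ⬝ᵥ ((Aᴴ * A) *ᵥ colW A j) = eigL A j := by
  rw [mulVec_colW, dotProduct_smul, colW_dot]
  simp

lemma psd_quad {M : Matrix (Fin q) (Fin q) ℝ} (h : M.PosSemidef) (x : Fin q → ℝ) :
    0 ≤ x ⬝ᵥ (M *ᵥ x) := by
  have := h.dotProduct_mulVec_nonneg x
  simpa using this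

lemma conj_diag_psd (W : Matrix (Fin q) (Fin q) ℝ) {d : Fin q → ℝ} (hd : ∀ j, 0 ≤ d j) :
    (W * Matrix.diagonal d * Wᴴ).PosSemidef :=
  (Matrix.posSemidef_diagonal_iff.mpr hd).mul_mul_conjTranspose_same W

lemma quad_conj (A : Matrix (Fin p) (Fin q) ℝ) (x : Fin q → ℝ) :
    x ⬝ᵥ ((Aᴴ * A) *ᵥ x) = (A *ᵥ x) ⬝ᵥ (A *ᵥ x) := by
  rw [Matrix.conjTranspose_eq_transpose_of_trivial, ← Matrix.mulVec_mulVec,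
    Matrix.dotProduct_mulVec, Matrix.vecMul_transpose]


-- new material
lemma svals_eq (A : Matrix (Fin p) (Fin q) ℝ) (j : Fin q) :
    svals A j = Real.sqrt (eigL A j) := rfl

lemma svals_nonneg (A : Matrix (Fin p) (Fin q) ℝ) (j : Fin q) : 0 ≤ svals A j :=
  Real.sqrt_nonneg _

lemma svals_sq (A : Matrix (Fin p) (Fin q) ℝ) (j : Fin q) : svals A j ^ 2 = eigL A j := by
  rw [svals_eq, Real.sq_sqrt (eigL_nonneg A j)]

lemma nucNorm_nonneg (A : Matrix (Fin p) (Fin q) ℝ) : 0 ≤ nucNorm A :=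
  Finset.sum_nonneg fun j _ => svals_nonneg A j

lemma opNorm_nonneg (A : Matrix (Fin p) (Fin q) ℝ) : 0 ≤ opNorm A :=
  Real.iSup_nonneg fun j => svals_nonneg A j

lemma svals_le_opNorm (A : Matrix (Fin p) (Fin q) ℝ) (j : Fin q) : svals A j ≤ opNorm A :=
  le_ciSup (Set.Finite.bddAbove (Set.finite_range _)) j

lemma opNorm_le_of_psd {A : Matrix (Fin p) (Fin q) ℝ} {c : ℝ} (hc : 0 ≤ c)
    (h : ((c ^ 2) • (1 : Matrix (Fin q) (Fin q) ℝ) - Aᴴ * A).PosSemidef) : opNorm A ≤ c := by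
  refine Real.iSup_le (fun j => ?_) hc
  have hq := psd_quad h (colW A j)
  have hx : colW A j ⬝ᵥ (((c ^ 2) • (1 : Matrix (Fin q) (Fin q) ℝ) - Aᴴ * A) *ᵥ colW A j)
      = c ^ 2 - eigL A j := by
    rw [Matrix.sub_mulVec, dotProduct_sub, quad_eigL, Matrix.smul_mulVec,
      Matrix.one_mulVec, dotProduct_smul, colW_dot]
    simp
  rw [hx] at hq
  have : eigL A j ≤ c ^ 2 := by linarith
  calc svals A j = Real.sqrt (eigL A j) := rfl
    _ ≤ Real.sqrt (c ^ 2) := Real.sqrt_le_sqrt this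
    _ = c := by rw [Real.sqrt_sq hc]

lemma smul_one_sub_conj (A : Matrix (Fin p) (Fin q) ℝ) (c : ℝ) :
    (c ^ 2) • (1 : Matrix (Fin q) (Fin q) ℝ) - Aᴴ * A
      = eigW A * Matrix.diagonal (fun j => c ^ 2 - eigL A j) * (eigW A)ᴴ := by
  have h1 : Matrix.diagonal (fun j => c ^ 2 - eigL A j)
      = (c ^ 2) • (1 : Matrix (Fin q) (Fin q) ℝ) - Matrix.diagonal (eigL A) := by
    ext i j
    by_cases h : i = j <;>
      simp [Matrix.diagonal_apply, Matrix.sub_apply, Matrix.smul_apply, Matrix.one_apply, h]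
  rw [h1, Matrix.mul_sub, Matrix.sub_mul, ← spectral]
  congr 1
  rw [Matrix.mul_smul, Matrix.smul_mul, Matrix.mul_one, eigW_mul_star]

lemma psd_of_opNorm_le {A : Matrix (Fin p) (Fin q) ℝ} {c : ℝ} (h : opNorm A ≤ c) :
    ((c ^ 2) • (1 : Matrix (Fin q) (Fin q) ℝ) - Aᴴ * A).PosSemidef := by
  rw [smul_one_sub_conj]
  refine conj_diag_psd _ (fun j => ?_)
  have h1 : svals A j ≤ c := (svals_le_opNorm A j).trans h
  have h2 : eigL A j ≤ c ^ 2 := by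
    rw [← svals_sq]
    exact pow_le_pow_left₀ (svals_nonneg A j) h1 2
  linarith

lemma mulVec_sq_le (A : Matrix (Fin p) (Fin q) ℝ) (x : Fin q → ℝ) :
    (A *ᵥ x) ⬝ᵥ (A *ᵥ x) ≤ (opNorm A) ^ 2 * (x ⬝ᵥ x) := by
  have hq := psd_quad (psd_of_opNorm_le (le_refl (opNorm A))) x
  have hx : x ⬝ᵥ ((((opNorm A) ^ 2) • (1 : Matrix (Fin q) (Fin q) ℝ) - Aᴴ * A) *ᵥ x)
      = (opNorm A) ^ 2 * (x ⬝ᵥ x) - (A *ᵥ x) ⬝ᵥ (A *ᵥ x) := by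
    rw [Matrix.sub_mulVec, dotProduct_sub, quad_conj, Matrix.smul_mulVec,
      Matrix.one_mulVec, dotProduct_smul]
    simp
  rw [hx] at hq
  linarith


lemma dot_self_nonneg {k : ℕ} (x : Fin k → ℝ) : 0 ≤ x ⬝ᵥ x :=
  Finset.sum_nonneg fun i _ => mul_self_nonneg (x i)

lemma dot_CS {k : ℕ} (x y : Fin k → ℝ) :
    x ⬝ᵥ y ≤ Real.sqrt (x ⬝ᵥ x) * Real.sqrt (y ⬝ᵥ y) := by
  have h := Finset.sum_mul_sq_le_sq_mul_sq Finset.univ x y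
  calc x ⬝ᵥ y ≤ |x ⬝ᵥ y| := le_abs_self _
    _ = Real.sqrt ((x ⬝ᵥ y) ^ 2) := (Real.sqrt_sq_eq_abs _).symm
    _ ≤ Real.sqrt ((x ⬝ᵥ x) * (y ⬝ᵥ y)) := by
        apply Real.sqrt_le_sqrt
        have e1 : x ⬝ᵥ x = ∑ i, x i ^ 2 := by simp [dotProduct, pow_two]
        have e2 : y ⬝ᵥ y = ∑ i, y i ^ 2 := by simp [dotProduct, pow_two]
        rw [e1, e2]
        exact h
    _ = Real.sqrt (x ⬝ᵥ x) * Real.sqrt (y ⬝ᵥ y) := Real.sqrt_mul (dot_self_nonneg x) _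

lemma colW_self_quad (A : Matrix (Fin p) (Fin q) ℝ) (j : Fin q) :
    (A *ᵥ colW A j) ⬝ᵥ (A *ᵥ colW A j) = eigL A j := by
  rw [← quad_conj, quad_eigL]

lemma trace_conj_expand (A B : Matrix (Fin p) (Fin q) ℝ) :
    Matrix.trace (Aᴴ * B) = ∑ j, (A *ᵥ colW A j) ⬝ᵥ (B *ᵥ colW A j) := by
  have e1 : Matrix.trace (Aᴴ * B) = Matrix.trace ((A * eigW A)ᴴ * (B * eigW A)) := by
    rw [Matrix.conjTranspose_mul]
    rw [show (eigW A)ᴴ * Aᴴ * (B * eigW A) = (eigW A)ᴴ * ((Aᴴ * B) * eigW A) by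
      simp only [Matrix.mul_assoc]]
    rw [Matrix.trace_mul_comm ((eigW A)ᴴ) ((Aᴴ * B) * eigW A), Matrix.mul_assoc,
      eigW_mul_star, Matrix.mul_one]
  rw [e1]
  simp only [Matrix.trace, Matrix.diag, Matrix.mul_apply, Matrix.conjTranspose_apply,
    Matrix.mulVec, dotProduct, colW, star_trivial]

lemma mulVec_colW_norm_le (A B : Matrix (Fin p) (Fin q) ℝ) (j : Fin q) :
    Real.sqrt ((B *ᵥ colW A j) ⬝ᵥ (B *ᵥ colW A j)) ≤ opNorm B := by
  have h1 : (B *ᵥ colW A j) ⬝ᵥ (B *ᵥ colW A j) ≤ (opNorm B) ^ 2 * (colW A j ⬝ᵥ colW A j) :=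
    mulVec_sq_le B (colW A j)
  have h2 : colW A j ⬝ᵥ colW A j = 1 := by rw [colW_dot]; simp
  rw [h2, mul_one] at h1
  calc Real.sqrt ((B *ᵥ colW A j) ⬝ᵥ (B *ᵥ colW A j)) ≤ Real.sqrt ((opNorm B) ^ 2) :=
        Real.sqrt_le_sqrt h1
    _ = opNorm B := Real.sqrt_sq (opNorm_nonneg B)

/-- Trace duality: trace(Aᴴ B) ≤ ‖B‖_op ‖A‖_nuc -/
lemma trace_dual (A B : Matrix (Fin p) (Fin q) ℝ) :
    Matrix.trace (Aᴴ * B) ≤ opNorm B * nucNorm A := by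
  rw [trace_conj_expand]
  have hterm : ∀ j, (A *ᵥ colW A j) ⬝ᵥ (B *ᵥ colW A j) ≤ svals A j * opNorm B := by
    intro j
    calc (A *ᵥ colW A j) ⬝ᵥ (B *ᵥ colW A j)
        ≤ Real.sqrt ((A *ᵥ colW A j) ⬝ᵥ (A *ᵥ colW A j))
          * Real.sqrt ((B *ᵥ colW A j) ⬝ᵥ (B *ᵥ colW A j)) := dot_CS _ _
      _ ≤ svals A j * opNorm B := by
          apply mul_le_mul
          · rw [colW_self_quad]; exact le_of_eq rfl
          · exact mulVec_colW_norm_le A B j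
          · exact Real.sqrt_nonneg _
          · exact svals_nonneg A j
  calc (∑ j, (A *ᵥ colW A j) ⬝ᵥ (B *ᵥ colW A j)) ≤ ∑ j, svals A j * opNorm B :=
        Finset.sum_le_sum fun j _ => hterm j
    _ = opNorm B * nucNorm A := by rw [nucNorm, ← Finset.sum_mul, mul_comm]

lemma unit_conj_sub {k : ℕ} {W : Matrix (Fin k) (Fin k) ℝ} (h : W * Wᴴ = 1) (c : ℝ)
    (d : Fin k → ℝ) :
    c • (1 : Matrix (Fin k) (Fin k) ℝ) - W * Matrix.diagonal d * Wᴴ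
      = W * Matrix.diagonal (fun j => c - d j) * Wᴴ := by
  have h1 : Matrix.diagonal (fun j => c - d j)
      = c • (1 : Matrix (Fin k) (Fin k) ℝ) - Matrix.diagonal d := by
    ext i j
    by_cases hij : i = j <;>
      simp [Matrix.diagonal_apply, Matrix.sub_apply, Matrix.smul_apply, Matrix.one_apply, hij]
  rw [h1, Matrix.mul_sub, Matrix.sub_mul]
  congr 1
  rw [Matrix.mul_smul, Matrix.smul_mul, Matrix.mul_one, h]

lemma trace_conj_diag {k : ℕ} {W : Matrix (Fin k) (Fin k) ℝ} (h : Wᴴ * W = 1)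
    (d : Fin k → ℝ) : Matrix.trace (W * Matrix.diagonal d * Wᴴ) = ∑ j, d j := by
  rw [Matrix.trace_mul_cycle, h, Matrix.one_mul, Matrix.trace_diagonal]

lemma diag_conjT {k : ℕ} (d : Fin k → ℝ) :
    (Matrix.diagonal d)ᴴ = Matrix.diagonal d := by
  simp [Matrix.diagonal_conjTranspose]

/-- Existence of a dual certificate achieving the nuclear norm. -/
lemma cert (A : Matrix (Fin p) (Fin q) ℝ) :
    ∃ W₀ : Matrix (Fin p) (Fin q) ℝ, opNorm W₀ ≤ 1 ∧
      Matrix.trace (Aᴴ * W₀) = nucNorm A := by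
  classical
  set g : Fin q → ℝ := fun j => if eigL A j = 0 then 0 else (Real.sqrt (eigL A j))⁻¹ with hg
  set M : Matrix (Fin q) (Fin q) ℝ := eigW A * Matrix.diagonal g * (eigW A)ᴴ with hM
  refine ⟨A * M, ?_, ?_⟩
  · -- operator norm at most 1
    have hWW : (A * M)ᴴ * (A * M)
        = eigW A * Matrix.diagonal (fun j => g j * eigL A j * g j) * (eigW A)ᴴ := by
      have hMH : Mᴴ = M := by
        rw [hM, Matrix.conjTranspose_mul, Matrix.conjTranspose_mul, diag_conjT,
          Matrix.conjTranspose_conjTranspose, Matrix.mul_assoc]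
      calc (A * M)ᴴ * (A * M) = Mᴴ * (Aᴴ * A) * M := by
            rw [Matrix.conjTranspose_mul]
            simp only [Matrix.mul_assoc]
        _ = M * (Aᴴ * A) * M := by rw [hMH]
        _ = eigW A * Matrix.diagonal (fun j => g j * eigL A j * g j) * (eigW A)ᴴ := by
            rw [spectral, hM]
            have e1 : eigW A * Matrix.diagonal g * (eigW A)ᴴ
                * (eigW A * Matrix.diagonal (eigL A) * (eigW A)ᴴ)
                * (eigW A * Matrix.diagonal g * (eigW A)ᴴ)
              = eigW A * (Matrix.diagonal g * ((eigW A)ᴴ * eigW A) * Matrix.diagonal (eigL A)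
                  * ((eigW A)ᴴ * eigW A) * Matrix.diagonal g) * (eigW A)ᴴ := by
              simp only [Matrix.mul_assoc]
            rw [e1, star_mul_eigW]
            congr 2
            rw [Matrix.mul_one, Matrix.mul_one, Matrix.diagonal_mul_diagonal,
              Matrix.diagonal_mul_diagonal]
    apply opNorm_le_of_psd (by norm_num : (0:ℝ) ≤ 1)
    rw [hWW, one_pow, unit_conj_sub (eigW_mul_star A)]
    refine conj_diag_psd _ (fun j => ?_)
    by_cases hj : eigL A j = 0
    · simp [hg, hj]
    · have hpos : 0 < eigL A j := lt_of_le_of_ne (eigL_nonneg A j) (Ne.symm hj)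
      have hs : Real.sqrt (eigL A j) * Real.sqrt (eigL A j) = eigL A j :=
        Real.mul_self_sqrt (le_of_lt hpos)
      have hsne : Real.sqrt (eigL A j) ≠ 0 := by positivity
      simp only [hg, hj, if_false]
      field_simp
      nlinarith [hs]
  · -- trace equals nuclear norm
    have hAW : Aᴴ * (A * M)
        = eigW A * Matrix.diagonal (fun j => eigL A j * g j) * (eigW A)ᴴ := by
      rw [← Matrix.mul_assoc, spectral, hM]
      have e1 : eigW A * Matrix.diagonal (eigL A) * (eigW A)ᴴ
          * (eigW A * Matrix.diagonal g * (eigW A)ᴴ)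
        = eigW A * (Matrix.diagonal (eigL A) * ((eigW A)ᴴ * eigW A) * Matrix.diagonal g)
            * (eigW A)ᴴ := by
        simp only [Matrix.mul_assoc]
      rw [e1, star_mul_eigW, Matrix.mul_one, Matrix.diagonal_mul_diagonal]
    rw [hAW, trace_conj_diag (star_mul_eigW A)]
    unfold nucNorm
    apply Finset.sum_congr rfl
    intro j _
    by_cases hj : eigL A j = 0
    · simp [hg, hj, svals_eq, Real.sqrt_eq_zero', hj.le]
    · have hpos : 0 < eigL A j := lt_of_le_of_ne (eigL_nonneg A j) (Ne.symm hj)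
      have hs : Real.sqrt (eigL A j) * Real.sqrt (eigL A j) = eigL A j :=
        Real.mul_self_sqrt (le_of_lt hpos)
      have hsne : Real.sqrt (eigL A j) ≠ 0 := by positivity
      simp only [hg, hj, if_false, svals_eq]
      field_simp
      nlinarith [hs]

lemma eigenvalues_congr {k : ℕ} {M M' : Matrix (Fin k) (Fin k) ℝ} (h : M = M')
    (hM : M.IsHermitian) (hM' : M'.IsHermitian) : hM.eigenvalues = hM'.eigenvalues := by
  subst h; rfl

lemma svals_neg (B : Matrix (Fin p) (Fin q) ℝ) : svals (-B) = svals B := by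
  funext j
  unfold svals
  congr 1
  exact congrFun (eigenvalues_congr (by simp) _ _) j

lemma opNorm_neg (B : Matrix (Fin p) (Fin q) ℝ) : opNorm (-B) = opNorm B := by
  unfold opNorm
  rw [svals_neg]

lemma neg_trace_dual (A B : Matrix (Fin p) (Fin q) ℝ) :
    -(opNorm B * nucNorm A) ≤ Matrix.trace (Aᴴ * B) := by
  have h := trace_dual A (-B)
  rw [Matrix.mul_neg, Matrix.trace_neg, opNorm_neg] at h
  linarith

/-- Triangle inequality for the nuclear norm. -/
lemma nucNorm_add_le (A B : Matrix (Fin p) (Fin q) ℝ) :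
    nucNorm (A + B) ≤ nucNorm A + nucNorm B := by
  obtain ⟨W₀, hop, htr⟩ := cert (A + B)
  have hsplit : Matrix.trace ((A + B)ᴴ * W₀)
      = Matrix.trace (Aᴴ * W₀) + Matrix.trace (Bᴴ * W₀) := by
    rw [Matrix.conjTranspose_add, Matrix.add_mul, Matrix.trace_add]
  have h1 : Matrix.trace (Aᴴ * W₀) ≤ nucNorm A := by
    have := trace_dual A W₀
    nlinarith [nucNorm_nonneg A]
  have h2 : Matrix.trace (Bᴴ * W₀) ≤ nucNorm B := by
    have := trace_dual B W₀
    nlinarith [nucNorm_nonneg B]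
  rw [← htr, hsplit]
  linarith

lemma frob_nonneg (A : Matrix (Fin p) (Fin q) ℝ) : 0 ≤ frobNorm A := Real.sqrt_nonneg _

lemma frob_eq (A : Matrix (Fin p) (Fin q) ℝ) :
    frobNorm A = Real.sqrt (Matrix.trace (Aᴴ * A)) := by
  unfold frobNorm
  congr 1
  simp only [Matrix.trace, Matrix.diag, Matrix.mul_apply, Matrix.conjTranspose_apply,
    star_trivial, ← pow_two]
  rw [Finset.sum_comm]

lemma trace_conj_self_nonneg (A : Matrix (Fin p) (Fin q) ℝ) :
    0 ≤ Matrix.trace (Aᴴ * A) := by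
  simp only [Matrix.trace, Matrix.diag, Matrix.mul_apply, Matrix.conjTranspose_apply,
    star_trivial]
  exact Finset.sum_nonneg fun j _ => Finset.sum_nonneg fun i _ => mul_self_nonneg _

lemma frob_sq (A : Matrix (Fin p) (Fin q) ℝ) :
    frobNorm A ^ 2 = Matrix.trace (Aᴴ * A) := by
  rw [frob_eq, Real.sq_sqrt (trace_conj_self_nonneg A)]

lemma sum_eigL (A : Matrix (Fin p) (Fin q) ℝ) :
    ∑ j, eigL A j = frobNorm A ^ 2 := by
  rw [frob_sq, spectral, trace_conj_diag (star_mul_eigW A)]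

/-- Nuclear norm is at most sqrt(rank) times Frobenius norm. -/
lemma nucNorm_le_sqrt_rank (A : Matrix (Fin p) (Fin q) ℝ) :
    nucNorm A ≤ Real.sqrt (A.rank) * frobNorm A := by
  classical
  set S : Finset (Fin q) := Finset.univ.filter (fun j => eigL A j ≠ 0) with hS
  have hsum : nucNorm A = ∑ j ∈ S, Real.sqrt (eigL A j) := by
    unfold nucNorm
    rw [eq_comm]
    apply Finset.sum_subset (Finset.subset_univ S)
    intro j _ hj
    have : eigL A j = 0 := by
      by_contra hne
      exact hj (by simp [hS, hne])
    rw [this, Real.sqrt_zero]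
  have hcard : (S.card : ℝ) = (A.rank : ℝ) := by
    have h1 := (Matrix.isHermitian_conjTranspose_mul_self A).rank_eq_card_non_zero_eigs
    have h2 : (Aᴴ * A).rank = A.rank := Matrix.rank_conjTranspose_mul_self A
    have h3 : Fintype.card {j // eigL A j ≠ 0} = S.card := by
      rw [Fintype.card_subtype]
    have h4 : S.card = A.rank := by
      rw [← h3, ← h2, h1]
      rfl
    exact_mod_cast congrArg Nat.cast h4
  have hcs := Finset.sum_mul_sq_le_sq_mul_sq S (fun j => Real.sqrt (eigL A j)) (fun _ => 1)
  have e1 : ∑ j ∈ S, Real.sqrt (eigL A j) * 1 = ∑ j ∈ S, Real.sqrt (eigL A j) := by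
    simp
  have e2 : ∑ j ∈ S, (Real.sqrt (eigL A j)) ^ 2 = ∑ j ∈ S, eigL A j := by
    apply Finset.sum_congr rfl
    intro j _
    rw [Real.sq_sqrt (eigL_nonneg A j)]
  have e3 : ∑ _j ∈ S, (1:ℝ) ^ 2 = (S.card : ℝ) := by simp
  rw [e1, e2, e3] at hcs
  have h4 : ∑ j ∈ S, eigL A j ≤ frobNorm A ^ 2 := by
    rw [← sum_eigL A]
    apply Finset.sum_le_sum_of_subset_of_nonneg (Finset.subset_univ S)
    intro j _ _
    exact eigL_nonneg A j
  have h5 : (∑ j ∈ S, Real.sqrt (eigL A j)) ^ 2 ≤ (A.rank : ℝ) * frobNorm A ^ 2 := by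
    calc (∑ j ∈ S, Real.sqrt (eigL A j)) ^ 2 ≤ (∑ j ∈ S, eigL A j) * (S.card : ℝ) := hcs
      _ ≤ frobNorm A ^ 2 * (A.rank : ℝ) := by
          apply mul_le_mul h4 (le_of_eq hcard) (by positivity)
          positivity
      _ = (A.rank : ℝ) * frobNorm A ^ 2 := by ring
  rw [hsum]
  have hnn : 0 ≤ ∑ j ∈ S, Real.sqrt (eigL A j) :=
    Finset.sum_nonneg fun j _ => Real.sqrt_nonneg _
  calc ∑ j ∈ S, Real.sqrt (eigL A j)
      = Real.sqrt ((∑ j ∈ S, Real.sqrt (eigL A j)) ^ 2) := (Real.sqrt_sq hnn).symm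
    _ ≤ Real.sqrt ((A.rank : ℝ) * frobNorm A ^ 2) := Real.sqrt_le_sqrt h5
    _ = Real.sqrt (A.rank) * frobNorm A := by
        rw [Real.sqrt_mul (by positivity), Real.sqrt_sq (frob_nonneg A)]

/-- Rank of a sum is at most the sum of the ranks. -/
lemma rank_add_le {a b : ℕ} (A B : Matrix (Fin a) (Fin b) ℝ) :
    (A + B).rank ≤ A.rank + B.rank := by
  unfold Matrix.rank
  have h1 : (A + B).mulVecLin = A.mulVecLin + B.mulVecLin := Matrix.mulVecLin_add A B
  have h2 : LinearMap.range (A.mulVecLin + B.mulVecLin)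
      ≤ LinearMap.range A.mulVecLin ⊔ LinearMap.range B.mulVecLin := by
    rintro x ⟨y, rfl⟩
    exact Submodule.mem_sup.mpr ⟨A.mulVecLin y, ⟨y, rfl⟩, B.mulVecLin y, ⟨y, rfl⟩, rfl⟩
  calc Module.finrank ℝ (LinearMap.range (A + B).mulVecLin)
      ≤ Module.finrank ℝ ↑(LinearMap.range A.mulVecLin ⊔ LinearMap.range B.mulVecLin) := by
        rw [h1]
        exact Submodule.finrank_mono h2
    _ ≤ _ := Submodule.finrank_add_le_finrank_add_finrank _ _

lemma trace_conjT {k : ℕ} (M : Matrix (Fin k) (Fin k) ℝ) :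
    Matrix.trace (Mᴴ) = Matrix.trace M := by
  rw [Matrix.trace_conjTranspose, star_trivial]

lemma trace_conj_comm (A B : Matrix (Fin p) (Fin q) ℝ) :
    Matrix.trace (Aᴴ * B) = Matrix.trace (Bᴴ * A) := by
  rw [← trace_conjT (Bᴴ * A), Matrix.conjTranspose_mul, Matrix.conjTranspose_conjTranspose]

/-- Pythagoras: removing an orthogonal-projection component decreases Frobenius norm. -/
lemma frob_sub_proj_le {a b : ℕ} (Δ : Matrix (Fin a) (Fin b) ℝ)
    (R : Matrix (Fin a) (Fin a) ℝ) (S : Matrix (Fin b) (Fin b) ℝ)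
    (hR : R * R = R) (hRs : Rᴴ = R) (hS : S * S = S) (hSs : Sᴴ = S) :
    frobNorm (Δ - R * Δ * S) ≤ frobNorm Δ := by
  set E : Matrix (Fin a) (Fin b) ℝ := R * Δ * S with hE
  have hEc : Eᴴ * E = S * (Δᴴ * (R * (Δ * S))) := by
    rw [hE, Matrix.conjTranspose_mul, Matrix.conjTranspose_mul, hRs, hSs]
    calc S * (Δᴴ * Rᴴᴴ) * (R * Δ * S) = S * (Δᴴ * ((R * R) * (Δ * S))) := by
          rw [Matrix.conjTranspose_conjTranspose]
          simp only [Matrix.mul_assoc]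
      _ = S * (Δᴴ * (R * (Δ * S))) := by rw [hR]
  have key : Matrix.trace (Δᴴ * E) = Matrix.trace (Eᴴ * E) := by
    rw [hEc, Matrix.trace_mul_comm S (Δᴴ * (R * (Δ * S)))]
    have e1 : Δᴴ * (R * (Δ * S)) * S = Δᴴ * (R * (Δ * (S * S))) := by
      simp only [Matrix.mul_assoc]
    rw [e1, hS, hE]
    simp only [Matrix.mul_assoc]
  have key2 : Matrix.trace (Eᴴ * Δ) = Matrix.trace (Δᴴ * E) := trace_conj_comm E Δ
  have hexp : Matrix.trace ((Δ - E)ᴴ * (Δ - E))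
      = Matrix.trace (Δᴴ * Δ) - Matrix.trace (Eᴴ * E) := by
    rw [Matrix.conjTranspose_sub, Matrix.sub_mul, Matrix.mul_sub, Matrix.mul_sub]
    rw [Matrix.trace_sub, Matrix.trace_sub, Matrix.trace_sub, key2, key]
    ring
  have hnn := trace_conj_self_nonneg E
  rw [frob_eq, frob_eq Δ, hexp]
  apply Real.sqrt_le_sqrt
  linarith

/-- First-order lower bound for the quadratic loss. -/
lemma loss_grad_ineq {N' n' d' : ℕ} (hN : 0 < N') (X : Matrix (Fin N') (Fin n') ℝ)
    (Z : Matrix (Fin N') (Fin d') ℝ) (Θ1 Θ2 : Matrix (Fin d') (Fin n') ℝ) :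
    lossFn X Z Θ1 + Matrix.trace ((gradFn X Z Θ1)ᴴ * (Θ2 - Θ1)) ≤ lossFn X Z Θ2 := by
  have hNpos : (0:ℝ) < (N' : ℝ) := by exact_mod_cast hN
  set R : Matrix (Fin N') (Fin n') ℝ := X - Z * Θ1 with hR
  set Sm : Matrix (Fin N') (Fin n') ℝ := Z * (Θ2 - Θ1) with hSm
  have e0 : X - Z * Θ2 = R - Sm := by
    rw [hR, hSm, Matrix.mul_sub]
    abel
  have hgrad : Matrix.trace ((gradFn X Z Θ1)ᴴ * (Θ2 - Θ1))
      = -(1 / (N' : ℝ)) * Matrix.trace (Rᴴ * Sm) := by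
    unfold gradFn
    rw [Matrix.conjTranspose_smul, Matrix.smul_mul, Matrix.trace_smul]
    have e1 : ((Zᵀ * (Z * Θ1 - X))ᴴ * (Θ2 - Θ1))
        = (Z * Θ1 - X)ᴴ * Sm := by
      rw [Matrix.conjTranspose_mul, hSm]
      have ez : (Zᵀ)ᴴ = Z := by
        rw [Matrix.conjTranspose_eq_transpose_of_trivial, Matrix.transpose_transpose]
      rw [ez, Matrix.mul_assoc]
    rw [e1]
    have e2 : (Z * Θ1 - X) = -R := by rw [hR]; abel
    rw [e2, Matrix.conjTranspose_neg, Matrix.neg_mul, Matrix.trace_neg]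
    simp [smul_eq_mul]
  have hloss2 : lossFn X Z Θ2 = (1 / (2 * (N' : ℝ)))
      * (Matrix.trace (Rᴴ * R) - 2 * Matrix.trace (Rᴴ * Sm) + Matrix.trace (Smᴴ * Sm)) := by
    unfold lossFn
    rw [e0, frob_sq]
    congr 1
    have hexp2 : (R - Sm)ᴴ * (R - Sm) = Rᴴ * R - Rᴴ * Sm - Smᴴ * R + Smᴴ * Sm := by
      rw [Matrix.conjTranspose_sub, Matrix.sub_mul, Matrix.mul_sub Rᴴ R Sm,
        Matrix.mul_sub Smᴴ R Sm]
      abel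
    rw [hexp2, Matrix.trace_add, Matrix.trace_sub, Matrix.trace_sub, trace_conj_comm Sm R]
    ring
  have hloss1 : lossFn X Z Θ1 = (1 / (2 * (N' : ℝ))) * Matrix.trace (Rᴴ * R) := by
    unfold lossFn
    rw [← hR, frob_sq]
  have hnn := trace_conj_self_nonneg Sm
  rw [hloss1, hloss2, hgrad]
  have h2N : (0:ℝ) < 2 * (N' : ℝ) := by linarith
  have e : (1:ℝ)/((N' : ℝ)) = 2 * (1/(2*(N' : ℝ))) := by field_simp
  rw [e]
  nlinarith [mul_nonneg (by positivity : (0:ℝ) ≤ 1/(2*(N':ℝ))) hnn]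

end ConeCS

set_option maxHeartbeats 2000000 in
/-- cone constraint for the error of the nuclear-norm penalized estimator.
With Δ̂_{M̄⊥} := (I − UUᵀ)Δ̂(I − VVᵀ) and Δ̂_{M̄} := Δ̂ − Δ̂_{M̄⊥}, if
λ ≥ 2‖∇L_N(Θ*)‖_op then ‖Δ̂_{M̄⊥}‖_nuc ≤ 3‖Δ̂_{M̄}‖_nuc, Δ̂_{M̄} has rank at most 2r,
and ‖Δ̂‖_nuc ≤ 4√(2r)‖Δ̂‖_F. -/
theorem cone_constraint_of_minimizer {N n m r : ℕ} (hN : 0 < N)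
    (X : Matrix (Fin N) (Fin n) ℝ) (Z : Matrix (Fin N) (Fin (n + m)) ℝ)
    (U : Matrix (Fin (n + m)) (Fin r) ℝ) (V : Matrix (Fin n) (Fin r) ℝ)
    (D : Matrix (Fin r) (Fin r) ℝ)
    (hU : Uᵀ * U = 1) (hV : Vᵀ * V = 1)
    (hDdiag : ∀ i j, i ≠ j → D i j = 0) (hDpos : ∀ i, 0 < D i i)
    (Θstar : Matrix (Fin (n + m)) (Fin n) ℝ)
    (hsvd : Θstar = U * D * Vᵀ) (hrank : Θstar.rank = r)
    (lam : ℝ) (hlam0 : 0 < lam)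
    (hlam : lam ≥ 2 * opNorm (gradFn X Z Θstar))
    (Θhat : Matrix (Fin (n + m)) (Fin n) ℝ)
    (hmin : ∀ Θ : Matrix (Fin (n + m)) (Fin n) ℝ,
      lossFn X Z Θhat + lam * nucNorm Θhat ≤ lossFn X Z Θ + lam * nucNorm Θ) :
    nucNorm ((1 - U * Uᵀ) * (Θhat - Θstar) * (1 - V * Vᵀ))
        ≤ 3 * nucNorm ((Θhat - Θstar) - (1 - U * Uᵀ) * (Θhat - Θstar) * (1 - V * Vᵀ)) ∧
      ((Θhat - Θstar) - (1 - U * Uᵀ) * (Θhat - Θstar) * (1 - V * Vᵀ)).rank ≤ 2 * r ∧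
      nucNorm (Θhat - Θstar) ≤ 4 * Real.sqrt (2 * r) * frobNorm (Θhat - Θstar) := by
  have hUt : Uᵀ = Uᴴ := (Matrix.conjTranspose_eq_transpose_of_trivial U).symm
  have hVt : Vᵀ = Vᴴ := (Matrix.conjTranspose_eq_transpose_of_trivial V).symm
  rw [hUt] at hU
  rw [hVt] at hV
  rw [hVt] at hsvd
  rw [hUt, hVt]
  set P : Matrix (Fin (n + m)) (Fin (n + m)) ℝ := U * Uᴴ with hP
  set Q : Matrix (Fin n) (Fin n) ℝ := V * Vᴴ with hQ
  set Δ : Matrix (Fin (n + m)) (Fin n) ℝ := Θhat - Θstar with hΔ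
  set E : Matrix (Fin (n + m)) (Fin n) ℝ := (1 - P) * Δ * (1 - Q) with hE
  set ΔM : Matrix (Fin (n + m)) (Fin n) ℝ := Δ - E with hΔM
  -- projection identities
  have hPP : P * P = P := by
    rw [hP]
    calc U * Uᴴ * (U * Uᴴ) = U * ((Uᴴ * U) * Uᴴ) := by simp only [Matrix.mul_assoc]
      _ = U * Uᴴ := by rw [hU, Matrix.one_mul]
  have hQQ : Q * Q = Q := by
    rw [hQ]
    calc V * Vᴴ * (V * Vᴴ) = V * ((Vᴴ * V) * Vᴴ) := by simp only [Matrix.mul_assoc]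
      _ = V * Vᴴ := by rw [hV, Matrix.one_mul]
  have hPs : Pᴴ = P := by
    rw [hP, Matrix.conjTranspose_mul, Matrix.conjTranspose_conjTranspose]
  have hQs : Qᴴ = Q := by
    rw [hQ, Matrix.conjTranspose_mul, Matrix.conjTranspose_conjTranspose]
  have hRP : (1 - P) * (1 - P) = 1 - P := by
    rw [Matrix.sub_mul, Matrix.one_mul, Matrix.mul_sub, Matrix.mul_one, hPP]
    abel
  have hRQ : (1 - Q) * (1 - Q) = 1 - Q := by
    rw [Matrix.sub_mul, Matrix.one_mul, Matrix.mul_sub, Matrix.mul_one, hQQ]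
    abel
  have hRPs : (1 - P)ᴴ = 1 - P := by
    rw [Matrix.conjTranspose_sub, Matrix.conjTranspose_one, hPs]
  have hRQs : (1 - Q)ᴴ = 1 - Q := by
    rw [Matrix.conjTranspose_sub, Matrix.conjTranspose_one, hQs]
  have hUperp : Uᴴ * (1 - P) = 0 := by
    rw [hP, Matrix.mul_sub, Matrix.mul_one, ← Matrix.mul_assoc, hU, Matrix.one_mul, sub_self]
  have hperpU : (1 - P) * U = 0 := by
    rw [hP, Matrix.sub_mul, Matrix.one_mul, Matrix.mul_assoc, hU, Matrix.mul_one, sub_self]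
  have hEleft : (1 - P) * E = E := by
    rw [hE, ← Matrix.mul_assoc, ← Matrix.mul_assoc, hRP]
  have hEright : E * (1 - Q) = E := by
    rw [hE, Matrix.mul_assoc ((1 - P) * Δ) (1 - Q) (1 - Q), hRQ]
  have hEHleft : Eᴴ * (1 - P) = Eᴴ := by
    have h := congrArg Matrix.conjTranspose hEleft
    rwa [Matrix.conjTranspose_mul, hRPs] at h
  have hQEH : (1 - Q) * Eᴴ = Eᴴ := by
    have h := congrArg Matrix.conjTranspose hEright
    rwa [Matrix.conjTranspose_mul, hRQs] at h
  -- rank part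
  have hsum2 : ΔM = P * Δ + (1 - P) * (Δ * Q) := by
    rw [hΔM, hE]
    have e1 : (1 - P) * Δ * (1 - Q) = Δ - P * Δ - (Δ * Q - P * (Δ * Q)) := by
      rw [Matrix.sub_mul (1 : Matrix (Fin (n+m)) (Fin (n+m)) ℝ) P Δ, Matrix.one_mul,
        Matrix.mul_sub (Δ - P * Δ) (1 : Matrix (Fin n) (Fin n) ℝ) Q, Matrix.mul_one,
        Matrix.sub_mul Δ (P * Δ) Q, Matrix.mul_assoc P Δ Q]
    rw [e1, Matrix.sub_mul (1 : Matrix (Fin (n+m)) (Fin (n+m)) ℝ) P (Δ * Q), Matrix.one_mul]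
    abel
  have hrankM : ΔM.rank ≤ 2 * r := by
    rw [hsum2]
    have h1 : (P * Δ).rank ≤ r := by
      have e : P * Δ = U * (Uᴴ * Δ) := by rw [hP, Matrix.mul_assoc]
      rw [e]
      calc (U * (Uᴴ * Δ)).rank ≤ U.rank := Matrix.rank_mul_le_left U (Uᴴ * Δ)
        _ ≤ Fintype.card (Fin r) := Matrix.rank_le_card_width U
        _ = r := Fintype.card_fin r
    have h2 : ((1 - P) * (Δ * Q)).rank ≤ r := by
      have e : (1 - P) * (Δ * Q) = ((1 - P) * (Δ * V)) * Vᴴ := by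
        rw [hQ]
        simp only [Matrix.mul_assoc]
      rw [e]
      calc (((1 - P) * (Δ * V)) * Vᴴ).rank ≤ (Vᴴ).rank :=
            Matrix.rank_mul_le_right _ Vᴴ
        _ ≤ Fintype.card (Fin r) := Matrix.rank_le_card_height Vᴴ
        _ = r := Fintype.card_fin r
    calc (P * Δ + (1 - P) * (Δ * Q)).rank
        ≤ (P * Δ).rank + ((1 - P) * (Δ * Q)).rank := ConeCS.rank_add_le _ _
      _ ≤ r + r := Nat.add_le_add h1 h2
      _ = 2 * r := by ring
  -- dual certificate for E
  obtain ⟨W', hW'op, hW'tr⟩ := ConeCS.cert E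
  set Wb : Matrix (Fin (n + m)) (Fin n) ℝ := U * Vᴴ + (1 - P) * (W' * (1 - Q)) with hWb
  -- operator norm of Wb at most one
  have hWbWb : Wbᴴ * Wb = Q + (1 - Q) * (W'ᴴ * ((1 - P) * (W' * (1 - Q)))) := by
    rw [hWb, Matrix.conjTranspose_add, Matrix.conjTranspose_mul U Vᴴ,
      Matrix.conjTranspose_conjTranspose, Matrix.conjTranspose_mul (1 - P) (W' * (1 - Q)),
      Matrix.conjTranspose_mul W' (1 - Q), hRPs, hRQs]
    rw [Matrix.add_mul, Matrix.mul_add, Matrix.mul_add]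
    have z2 : V * Uᴴ * ((1 - P) * (W' * (1 - Q))) = 0 := by
      calc V * Uᴴ * ((1 - P) * (W' * (1 - Q)))
          = V * ((Uᴴ * (1 - P)) * (W' * (1 - Q))) := by simp only [Matrix.mul_assoc]
        _ = 0 := by rw [hUperp, Matrix.zero_mul, Matrix.mul_zero]
    have z3 : (1 - Q) * W'ᴴ * (1 - P) * (U * Vᴴ) = 0 := by
      calc (1 - Q) * W'ᴴ * (1 - P) * (U * Vᴴ)
          = (1 - Q) * (W'ᴴ * (((1 - P) * U) * Vᴴ)) := by simp only [Matrix.mul_assoc]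
        _ = 0 := by rw [hperpU, Matrix.zero_mul, Matrix.mul_zero, Matrix.mul_zero]
    have t1 : V * Uᴴ * (U * Vᴴ) = Q := by
      calc V * Uᴴ * (U * Vᴴ) = V * ((Uᴴ * U) * Vᴴ) := by simp only [Matrix.mul_assoc]
        _ = Q := by rw [hU, Matrix.one_mul, hQ]
    have t4 : (1 - Q) * W'ᴴ * (1 - P) * ((1 - P) * (W' * (1 - Q)))
        = (1 - Q) * (W'ᴴ * ((1 - P) * (W' * (1 - Q)))) := by
      calc (1 - Q) * W'ᴴ * (1 - P) * ((1 - P) * (W' * (1 - Q)))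
          = (1 - Q) * (W'ᴴ * (((1 - P) * (1 - P)) * (W' * (1 - Q)))) := by
            simp only [Matrix.mul_assoc]
        _ = (1 - Q) * (W'ᴴ * ((1 - P) * (W' * (1 - Q)))) := by rw [hRP]
    rw [z2, z3, t1, t4]
    abel
  have hpsd1 : ((1 : Matrix (Fin n) (Fin n) ℝ) - W'ᴴ * W').PosSemidef := by
    have h := ConeCS.psd_of_opNorm_le hW'op
    rwa [one_pow, one_smul] at h
  have hpsd2 : (W'ᴴ * (P * W')).PosSemidef := by
    have h := Matrix.posSemidef_conjTranspose_mul_self (Uᴴ * W')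
    have e : (Uᴴ * W')ᴴ * (Uᴴ * W') = W'ᴴ * (P * W') := by
      rw [Matrix.conjTranspose_mul, Matrix.conjTranspose_conjTranspose, hP]
      simp only [Matrix.mul_assoc]
    rwa [e] at h
  have hMps : ((1 : Matrix (Fin n) (Fin n) ℝ) - W'ᴴ * ((1 - P) * W')).PosSemidef := by
    have e : (1 : Matrix (Fin n) (Fin n) ℝ) - W'ᴴ * ((1 - P) * W')
        = ((1 : Matrix (Fin n) (Fin n) ℝ) - W'ᴴ * W') + W'ᴴ * (P * W') := by
      rw [Matrix.sub_mul (1 : Matrix (Fin (n+m)) (Fin (n+m)) ℝ) P W', Matrix.one_mul,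
        Matrix.mul_sub W'ᴴ W' (P * W')]
      abel
    rw [e]
    exact hpsd1.add hpsd2
  -- operator norm bound for Wb
  have htarget : (1:ℝ) ^ 2 • (1 : Matrix (Fin n) (Fin n) ℝ) - Wbᴴ * Wb
      = (1 - Q)ᴴ * ((1 : Matrix (Fin n) (Fin n) ℝ) - W'ᴴ * ((1 - P) * W')) * (1 - Q) := by
    rw [hWbWb, hRQs, one_pow, one_smul]
    have rhs : (1 - Q) * ((1 : Matrix (Fin n) (Fin n) ℝ) - W'ᴴ * ((1 - P) * W')) * (1 - Q)
        = (1 - Q) - (1 - Q) * (W'ᴴ * ((1 - P) * (W' * (1 - Q)))) := by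
      rw [Matrix.mul_sub (1 - Q) (1 : Matrix (Fin n) (Fin n) ℝ) (W'ᴴ * ((1 - P) * W')),
        Matrix.mul_one, Matrix.sub_mul (1 - Q) ((1 - Q) * (W'ᴴ * ((1 - P) * W'))) (1 - Q),
        hRQ]
      congr 1
      simp only [Matrix.mul_assoc]
    rw [rhs]
    abel
  have hWbop : opNorm Wb ≤ 1 := by
    apply ConeCS.opNorm_le_of_psd (by norm_num : (0:ℝ) ≤ 1)
    rw [htarget]
    exact hMps.conjTranspose_mul_mul_same (1 - Q)
  -- diagonal matrix is symmetric
  have hDs : Dᴴ = D := by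
    ext i j
    by_cases hij : i = j
    · subst hij; simp [Matrix.conjTranspose_apply]
    · rw [Matrix.conjTranspose_apply, star_trivial, hDdiag j i (fun h => hij h.symm),
        hDdiag i j hij]
  have hΘstarH : Θstarᴴ = V * (D * Uᴴ) := by
    rw [hsvd, Matrix.conjTranspose_mul, Matrix.conjTranspose_mul,
      Matrix.conjTranspose_conjTranspose, hDs]
  -- trace identities for the lower bound
  have tΘ1 : Matrix.trace (Θstarᴴ * (U * Vᴴ)) = Matrix.trace D := by
    have e : Θstarᴴ * (U * Vᴴ) = V * (D * Vᴴ) := by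
      rw [hΘstarH]
      calc V * (D * Uᴴ) * (U * Vᴴ) = V * (D * ((Uᴴ * U) * Vᴴ)) := by
            simp only [Matrix.mul_assoc]
        _ = V * (D * Vᴴ) := by rw [hU, Matrix.one_mul]
    rw [e, Matrix.trace_mul_comm V (D * Vᴴ), Matrix.mul_assoc, Matrix.trace_mul_comm D (Vᴴ * V),
      Matrix.trace_mul_comm (Vᴴ * V) D, hV, Matrix.mul_one]
  have tΘ2 : Matrix.trace (Θstarᴴ * ((1 - P) * (W' * (1 - Q)))) = 0 := by
    have e : Θstarᴴ * ((1 - P) * (W' * (1 - Q))) = 0 := by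
      rw [hΘstarH]
      calc V * (D * Uᴴ) * ((1 - P) * (W' * (1 - Q)))
          = V * (D * ((Uᴴ * (1 - P)) * (W' * (1 - Q)))) := by simp only [Matrix.mul_assoc]
        _ = 0 := by rw [hUperp, Matrix.zero_mul, Matrix.mul_zero, Matrix.mul_zero]
    rw [e, Matrix.trace_zero]
  have tE1 : Matrix.trace (Eᴴ * (U * Vᴴ)) = 0 := by
    have e : Eᴴ * (U * Vᴴ) = 0 := by
      calc Eᴴ * (U * Vᴴ) = (Eᴴ * (1 - P)) * (U * Vᴴ) := by rw [hEHleft]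
        _ = Eᴴ * (((1 - P) * U) * Vᴴ) := by simp only [Matrix.mul_assoc]
        _ = 0 := by rw [hperpU, Matrix.zero_mul, Matrix.mul_zero]
    rw [e, Matrix.trace_zero]
  have tE2 : Matrix.trace (Eᴴ * ((1 - P) * (W' * (1 - Q)))) = nucNorm E := by
    have e : Eᴴ * ((1 - P) * (W' * (1 - Q))) = (Eᴴ * W') * (1 - Q) := by
      calc Eᴴ * ((1 - P) * (W' * (1 - Q))) = (Eᴴ * (1 - P)) * (W' * (1 - Q)) := by
            simp only [Matrix.mul_assoc]
        _ = (Eᴴ * W') * (1 - Q) := by rw [hEHleft, Matrix.mul_assoc]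
    rw [e, Matrix.trace_mul_comm, ← Matrix.mul_assoc, hQEH, hW'tr]
  have hsplitΘ : Θhat = Θstar + ΔM + E := by
    rw [hΔM, hΔ]
    abel
  have hlower : Matrix.trace D - nucNorm ΔM + nucNorm E ≤ nucNorm Θhat := by
    have h1 : Matrix.trace (Θhatᴴ * Wb) ≤ nucNorm Θhat :=
      (ConeCS.trace_dual Θhat Wb).trans
        (mul_le_of_le_one_left (ConeCS.nucNorm_nonneg Θhat) hWbop)
    have h2 : Matrix.trace (Θhatᴴ * Wb)
        = Matrix.trace (Θstarᴴ * Wb) + Matrix.trace (ΔMᴴ * Wb) + Matrix.trace (Eᴴ * Wb) := by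
      conv_lhs => rw [hsplitΘ]
      rw [Matrix.conjTranspose_add, Matrix.conjTranspose_add, Matrix.add_mul, Matrix.add_mul,
        Matrix.trace_add, Matrix.trace_add]
    have h3 : Matrix.trace (Θstarᴴ * Wb) = Matrix.trace D := by
      rw [hWb, Matrix.mul_add, Matrix.trace_add, tΘ1, tΘ2, add_zero]
    have h4 : Matrix.trace (Eᴴ * Wb) = nucNorm E := by
      rw [hWb, Matrix.mul_add, Matrix.trace_add, tE1, tE2, zero_add]
    have h5 : -(nucNorm ΔM) ≤ Matrix.trace (ΔMᴴ * Wb) := by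
      have h := ConeCS.neg_trace_dual ΔM Wb
      have h6 := mul_le_of_le_one_left (ConeCS.nucNorm_nonneg ΔM) hWbop
      linarith
    rw [h2, h3, h4] at h1
    linarith
  -- upper bound: nuclear norm of Θstar is at most trace D
  obtain ⟨Ws, hWsop, hWstr⟩ := ConeCS.cert Θstar
  have hstar : nucNorm Θstar ≤ Matrix.trace D := by
    rw [← hWstr]
    have e : Matrix.trace (Θstarᴴ * Ws) = Matrix.trace (D * ((Uᴴ * Ws) * V)) := by
      rw [hΘstarH, Matrix.mul_assoc, Matrix.trace_mul_comm V (D * Uᴴ * Ws)]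
      congr 1
      simp only [Matrix.mul_assoc]
    rw [e]
    have hdiag : Matrix.trace (D * ((Uᴴ * Ws) * V)) = ∑ i, D i i * ((Uᴴ * Ws) * V) i i := by
      rw [Matrix.trace]
      apply Finset.sum_congr rfl
      intro i _
      rw [Matrix.diag]
      rw [Matrix.mul_apply]
      rw [Finset.sum_eq_single i]
      · intro k _ hk
        rw [hDdiag i k (fun h => hk h.symm), zero_mul]
      · intro h
        exact absurd (Finset.mem_univ i) h
    rw [hdiag]
    have hMle : ∀ i, ((Uᴴ * Ws) * V) i i ≤ 1 := by
      intro i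
      set u : Fin (n + m) → ℝ := fun a => U a i with hu
      set v : Fin n → ℝ := fun b => V b i with hv
      have he : ((Uᴴ * Ws) * V) i i = u ⬝ᵥ (Ws *ᵥ v) := by
        calc ((Uᴴ * Ws) * V) i i = ∑ b, (∑ a, U a i * Ws a b) * V b i := by
              simp [Matrix.mul_apply, Matrix.conjTranspose_apply, Finset.sum_mul]
          _ = ∑ a, ∑ b, U a i * Ws a b * V b i := by
              rw [Finset.sum_comm]
              apply Finset.sum_congr rfl
              intro b _
              rw [Finset.sum_mul]
          _ = u ⬝ᵥ (Ws *ᵥ v) := by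
              simp [dotProduct, Matrix.mulVec, hu, hv, Finset.mul_sum, mul_assoc]
      have huu : u ⬝ᵥ u = 1 := by
        have : u ⬝ᵥ u = (Uᴴ * U) i i := by
          simp [Matrix.mul_apply, Matrix.conjTranspose_apply, dotProduct, hu]
        rw [this, hU, Matrix.one_apply_eq]
      have hvv : v ⬝ᵥ v = 1 := by
        have : v ⬝ᵥ v = (Vᴴ * V) i i := by
          simp [Matrix.mul_apply, Matrix.conjTranspose_apply, dotProduct, hv]
        rw [this, hV, Matrix.one_apply_eq]
      have hws : (Ws *ᵥ v) ⬝ᵥ (Ws *ᵥ v) ≤ 1 := by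
        have h := ConeCS.mulVec_sq_le Ws v
        rw [hvv, mul_one] at h
        have hop2 : (opNorm Ws) ^ 2 ≤ 1 := by
          nlinarith [ConeCS.opNorm_nonneg Ws]
        linarith
      calc ((Uᴴ * Ws) * V) i i = u ⬝ᵥ (Ws *ᵥ v) := he
        _ ≤ Real.sqrt (u ⬝ᵥ u) * Real.sqrt ((Ws *ᵥ v) ⬝ᵥ (Ws *ᵥ v)) := ConeCS.dot_CS _ _
        _ ≤ 1 * 1 := by
            apply mul_le_mul
            · rw [huu, Real.sqrt_one]
            · calc Real.sqrt ((Ws *ᵥ v) ⬝ᵥ (Ws *ᵥ v)) ≤ Real.sqrt 1 := Real.sqrt_le_sqrt hws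
                _ = 1 := Real.sqrt_one
            · exact Real.sqrt_nonneg _
            · norm_num
        _ = 1 := by norm_num
    calc ∑ i, D i i * ((Uᴴ * Ws) * V) i i ≤ ∑ i, D i i := by
          apply Finset.sum_le_sum
          intro i _
          nlinarith [hDpos i, hMle i]
      _ = Matrix.trace D := rfl
  -- gradient inequality from minimality
  have hGineq : lam * nucNorm Θhat
      ≤ lam * nucNorm Θstar + (lam / 2) * (nucNorm ΔM + nucNorm E) := by
    have hquad := ConeCS.loss_grad_ineq hN X Z Θstar Θhat
    have hminΘ := hmin Θstar
    have hΔME : Δ = ΔM + E := by rw [hΔM]; abel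
    have hnucΔ : nucNorm Δ ≤ nucNorm ΔM + nucNorm E := by
      conv_lhs => rw [hΔME]
      exact ConeCS.nucNorm_add_le ΔM E
    have htr : -(Matrix.trace ((gradFn X Z Θstar)ᴴ * (Θhat - Θstar)))
        ≤ (lam / 2) * (nucNorm ΔM + nucNorm E) := by
      have h1 := ConeCS.neg_trace_dual Δ (gradFn X Z Θstar)
      have h2 : Matrix.trace ((gradFn X Z Θstar)ᴴ * (Θhat - Θstar))
          = Matrix.trace (Δᴴ * gradFn X Z Θstar) := by
        rw [← hΔ, ConeCS.trace_conj_comm]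
      rw [h2]
      have h3 : opNorm (gradFn X Z Θstar) * nucNorm Δ ≤ (lam / 2) * (nucNorm ΔM + nucNorm E) := by
        have hnn := ConeCS.nucNorm_nonneg Δ
        have hop : opNorm (gradFn X Z Θstar) ≤ lam / 2 := by linarith
        calc opNorm (gradFn X Z Θstar) * nucNorm Δ ≤ (lam / 2) * nucNorm Δ :=
              mul_le_mul_of_nonneg_right hop hnn
          _ ≤ (lam / 2) * (nucNorm ΔM + nucNorm E) := by
              apply mul_le_mul_of_nonneg_left hnucΔ
              linarith
      linarith
    linarith
  -- cone inequality
  have hcone : nucNorm E ≤ 3 * nucNorm ΔM := by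
    have hA : lam * (Matrix.trace D - nucNorm ΔM + nucNorm E) ≤ lam * nucNorm Θhat :=
      mul_le_mul_of_nonneg_left hlower (le_of_lt hlam0)
    have hB : lam * nucNorm Θstar ≤ lam * Matrix.trace D :=
      mul_le_mul_of_nonneg_left hstar (le_of_lt hlam0)
    have key : lam * (Matrix.trace D - nucNorm ΔM + nucNorm E)
        ≤ lam * Matrix.trace D + (lam / 2) * (nucNorm ΔM + nucNorm E) := by linarith
    by_contra hcon
    push_neg at hcon
    nlinarith [mul_pos hlam0 (by linarith : (0:ℝ) < nucNorm E - 3 * nucNorm ΔM)]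
  refine ⟨hcone, hrankM, ?_⟩
  -- final bound
  have hΔME : Δ = ΔM + E := by rw [hΔM]; abel
  have h4M : nucNorm Δ ≤ 4 * nucNorm ΔM := by
    have h := ConeCS.nucNorm_add_le ΔM E
    conv_lhs => rw [hΔME]
    linarith
  have hnucM : nucNorm ΔM ≤ Real.sqrt (ΔM.rank) * frobNorm ΔM := ConeCS.nucNorm_le_sqrt_rank ΔM
  have hsq : Real.sqrt ((ΔM.rank : ℝ)) ≤ Real.sqrt (2 * (r:ℝ)) := by
    apply Real.sqrt_le_sqrt
    have : (ΔM.rank : ℝ) ≤ ((2 * r : ℕ) : ℝ) := Nat.cast_le.mpr hrankM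
    push_cast at this
    linarith
  have hfr : frobNorm ΔM ≤ frobNorm Δ := by
    rw [hΔM, hE]
    exact ConeCS.frob_sub_proj_le Δ (1 - P) (1 - Q) hRP hRPs hRQ hRQs
  have hfrnn := ConeCS.frob_nonneg ΔM
  have hsqnn : (0:ℝ) ≤ Real.sqrt ((ΔM.rank : ℝ)) := Real.sqrt_nonneg _
  have hsq2nn : (0:ℝ) ≤ Real.sqrt (2 * (r:ℝ)) := Real.sqrt_nonneg _
  calc nucNorm Δ ≤ 4 * nucNorm ΔM := h4M
    _ ≤ 4 * (Real.sqrt (ΔM.rank) * frobNorm ΔM) := by linarith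
    _ ≤ 4 * (Real.sqrt (2 * (r:ℝ)) * frobNorm Δ) := by
        have h1 : Real.sqrt ((ΔM.rank : ℝ)) * frobNorm ΔM
            ≤ Real.sqrt (2 * (r:ℝ)) * frobNorm Δ := by
          apply mul_le_mul hsq hfr hfrnn hsq2nn
        linarith
    _ = 4 * Real.sqrt (2 * (r:ℝ)) * frobNorm Δ := by ring
end

section
/- Let σ₁ ≥ σ₂ ≥ ⋯ ≥ σ_n ≥ 0 be real numbers and let K ≥ 1 be an integer. Write n = Kp + q with integers p ≥ 0 and 0 ≤ q < K, and partition {1, …, n} into consecutive blocks I_i = {K(i−1)+1, …, Ki} for i = 1, …, p and I_{p+1} = {Kp+1, …, n}. Then ∑_{i=2}^{p+1} √(∑_{j∈I_i} σ_j²) ≤ (1/√K)·∑_{j=1}^{n} σ_j. -/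
/-!
Within a nonincreasing sequence, every entry of block `i ≥ 2` is at most the last entry `x` of
block `i - 1`, so the Euclidean norm of block `i` is at most `√K * x`, while block `i - 1` has `K`
entries that are all at least `x`, so its sum is at least `K * x`. Hence each block norm is at most
`1 / √K` times the sum of the preceding block, and these preceding blocks are disjoint.
-/

open Finset

theorem sqrt_sum_sq_le_sqrt_card_mul {ι : Type*} (s : Finset ι) (f : ι → ℝ) {c : ℝ}
    (hc : 0 ≤ c) (hf : ∀ i ∈ s, |f i| ≤ c) :
    √(∑ i ∈ s, f i ^ 2) ≤ √(#s : ℝ) * c := by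
  have hsum : ∑ i ∈ s, f i ^ 2 ≤ #s * c ^ 2 := by
    simpa using s.sum_le_card_nsmul _ _ fun i hi ↦
      sq_le_sq' (abs_le.mp (hf i hi)).1 (abs_le.mp (hf i hi)).2
  calc √(∑ i ∈ s, f i ^ 2) ≤ √(#s * c ^ 2) := Real.sqrt_le_sqrt hsum
    _ = √(#s : ℝ) * c := by rw [Real.sqrt_mul (Nat.cast_nonneg _), Real.sqrt_sq hc]

theorem sum_Ioc_zero_mul_eq_sum_range {M : Type*} [AddCommMonoid M] (f : ℕ → M) (K p : ℕ) :
    ∑ j ∈ Ioc 0 (K * p), f j = ∑ m ∈ range p, ∑ j ∈ Ioc (K * m) (K * m + K), f j := by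
  induction p with
  | zero => simp
  | succ p ih =>
    rw [sum_range_succ, ← ih, mul_add_one,
      sum_Ioc_consecutive _ (Nat.zero_le _) (Nat.le_add_right _ _)]

theorem sqrt_sum_sq_block_le_sum_prev_block (σ : ℕ → ℝ) {K c b : ℕ} (hK : 0 < K)
    (hcb : c + K ≤ b) (hb : b ≤ c + 2 * K) (hσ : AntitoneOn σ (Set.Ioc c b))
    (hσ₀ : ∀ j ∈ Set.Ioc c b, 0 ≤ σ j) :
    √(∑ j ∈ Ioc (c + K) b, σ j ^ 2) ≤ 1 / √(K : ℝ) * ∑ j ∈ Ioc c (c + K), σ j := by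
  have hx : c + K ∈ Set.Ioc c b := ⟨by omega, hcb⟩
  set x := σ (c + K)
  have hsqrtK : 0 < √(K : ℝ) := Real.sqrt_pos.mpr (by exact_mod_cast hK)
  have hnext : √(∑ j ∈ Ioc (c + K) b, σ j ^ 2) ≤ √(K : ℝ) * x := by
    refine (sqrt_sum_sq_le_sqrt_card_mul _ _ (hσ₀ _ hx) fun j hj ↦ ?_).trans ?_
    · rw [mem_Ioc] at hj
      have hj' : j ∈ Set.Ioc c b := ⟨by omega, hj.2⟩
      rw [abs_of_nonneg (hσ₀ j hj')]
      exact hσ hx hj' hj.1.le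
    · gcongr
      · exact hσ₀ _ hx
      · rw [Nat.card_Ioc]; omega
  have hprev : K * x ≤ ∑ j ∈ Ioc c (c + K), σ j := by
    simpa using card_nsmul_le_sum (Ioc c (c + K)) σ x fun j hj ↦ by
      rw [mem_Ioc] at hj
      exact hσ ⟨hj.1, by omega⟩ hx hj.2
  calc √(∑ j ∈ Ioc (c + K) b, σ j ^ 2) ≤ √(K : ℝ) * x := hnext
    _ = 1 / √(K : ℝ) * (K * x) := by
      field_simp
      rw [Real.sq_sqrt (Nat.cast_nonneg _)]
      ring
    _ ≤ 1 / √(K : ℝ) * ∑ j ∈ Ioc c (c + K), σ j := by gcongr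

theorem block_norm_sum_le_general (n K p q : ℕ) (hK : 1 ≤ K) (hn : n = K * p + q)
    (σ : ℕ → ℝ)
    (hnonneg : ∀ j, 1 ≤ j → j ≤ n → 0 ≤ σ j)
    (hmono : ∀ j k, 1 ≤ j → j ≤ k → k ≤ n → σ k ≤ σ j) :
    ∑ i ∈ Finset.Icc 2 (p + 1),
        Real.sqrt (∑ j ∈ Finset.Icc (K * (i - 1) + 1) (min (K * i) n), (σ j) ^ 2)
      ≤ (1 / Real.sqrt K) * ∑ j ∈ Finset.Icc 1 n, σ j := by
  have hKp : K * p ≤ n := by omega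
  have hanti : AntitoneOn σ (Set.Icc 1 n) := fun j hj k hk hjk ↦ hmono j k hj.1 hjk hk.2
  have hsub : ∀ a b, b ≤ n → Set.Ioc a b ⊆ Set.Icc 1 n :=
    fun a b hb j hj ↦ ⟨Nat.one_le_of_lt hj.1, hj.2.trans hb⟩
  calc ∑ i ∈ Icc 2 (p + 1), √(∑ j ∈ Icc (K * (i - 1) + 1) (min (K * i) n), σ j ^ 2)
      = ∑ m ∈ range p, √(∑ j ∈ Ioc (K * m + K) (min (K * m + 2 * K) n), σ j ^ 2) := by
        rw [← Ico_add_one_right_eq_Icc, sum_Ico_eq_sum_range]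
        refine sum_congr (by simp) fun m _ ↦ ?_
        have hm : 2 + m - 1 = m + 1 := by omega
        rw [← Icc_add_one_left_eq_Ioc, hm, mul_add_one, add_comm 2 m, mul_add, mul_comm K 2]
    _ ≤ ∑ m ∈ range p, 1 / √(K : ℝ) * ∑ j ∈ Ioc (K * m) (K * m + K), σ j := by
        refine sum_le_sum fun m hm ↦ ?_
        have hmK : K * m + K ≤ n := by
          rw [mem_range] at hm
          nlinarith
        have hblock := hsub (K * m) _ (min_le_right (K * m + 2 * K) n)
        exact sqrt_sum_sq_block_le_sum_prev_block σ hK (by omega) (min_le_left _ _)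
          (hanti.mono hblock) fun j hj ↦ hnonneg j (hblock hj).1 (hblock hj).2
    _ = 1 / √(K : ℝ) * ∑ j ∈ Ioc 0 (K * p), σ j := by
        rw [← mul_sum, sum_Ioc_zero_mul_eq_sum_range]
    _ ≤ 1 / √(K : ℝ) * ∑ j ∈ Icc 1 n, σ j := by
        refine mul_le_mul_of_nonneg_left
          (sum_le_sum_of_subset_of_nonneg (fun j hj ↦ ?_) fun j hj _ ↦ ?_) (by positivity)
        · simp only [mem_Ioc, mem_Icc] at hj ⊢
          omega
        · rw [mem_Icc] at hj
          exact hnonneg j hj.1 hj.2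

/-- for a nonincreasing sequence σ₁ ≥ ⋯ ≥ σ_n ≥ 0 partitioned into consecutive
blocks of size K (the last block possibly smaller, with n = Kp + q, 0 ≤ q < K), the sum over
all blocks except the first of the Euclidean norms of the blocks is at most (1/√K) times the
total sum. The i-th block is I_i = {K(i−1)+1, …, min(Ki, n)}. -/
theorem block_norm_sum_le (n K p q : ℕ) (hK : 1 ≤ K) (hn : n = K * p + q) (hq : q < K)
    (σ : ℕ → ℝ)
    (hnonneg : ∀ j, 1 ≤ j → j ≤ n → 0 ≤ σ j)
    (hmono : ∀ j k, 1 ≤ j → j ≤ k → k ≤ n → σ k ≤ σ j) :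
    ∑ i ∈ Finset.Icc 2 (p + 1),
        Real.sqrt (∑ j ∈ Finset.Icc (K * (i - 1) + 1) (min (K * i) n), (σ j) ^ 2)
      ≤ (1 / Real.sqrt K) * ∑ j ∈ Finset.Icc 1 n, σ j :=
  block_norm_sum_le_general n K p q hK hn σ hnonneg hmono
end
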